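/- arXiv:1804.04894 — 9 statements merged into one kernel-verified Lean document; each statement's English description precedes it below -/
import Mathlib

section
/- Let H be a connected hypergraph in which every vertex v satisfies d_H(v) = h(v) for a function h from V(H) to the non-negative integers. Then every proper subhypergraph H' of H is strictly h-degenerate, i.e., every non-empty subhypergraph G of H' contains a vertex v with d_G(v) < h(v). -/
/-- A hypergraph with vertices and edge labels drawn from ℕ. -/
structure NHypergraph where
  V : Finset ℕ
  E : Finset ℕ
  inc : ℕ → Finset ℕ
  inc_sub : ∀ e ∈ E, inc e ⊆ V
  inc_card : ∀ e ∈ E, 2 ≤ (inc e).card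

namespace NHypergraph

/-- Degree of a vertex. -/
def deg (H : NHypergraph) (v : ℕ) : ℕ := (H.E.filter (fun e => v ∈ H.inc e)).card

/-- `G` is a subhypergraph of `H`. -/
def IsSub (G H : NHypergraph) : Prop :=
  G.V ⊆ H.V ∧ G.E ⊆ H.E ∧ ∀ e ∈ G.E, G.inc e = H.inc e

/-- The subhypergraph induced by a vertex set `X`. -/
def induce (H : NHypergraph) (X : Finset ℕ) : NHypergraph where
  V := X ∩ H.V
  E := H.E.filter (fun e => H.inc e ⊆ X)
  inc := H.inc
  inc_sub := fun e he => by
    have h := Finset.mem_filter.mp he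
    exact Finset.subset_inter h.2 (H.inc_sub e h.1)
  inc_card := fun e he => H.inc_card e (Finset.mem_filter.mp he).1

/-- The hypergraph obtained by shrinking `H` to `X`. -/
def shrink (H : NHypergraph) (X : Finset ℕ) : NHypergraph where
  V := X ∩ H.V
  E := H.E.filter (fun e => 2 ≤ (H.inc e ∩ X).card)
  inc := fun e => H.inc e ∩ X
  inc_sub := fun e he => by
    have h := Finset.mem_filter.mp he
    intro v hv
    have hv' := Finset.mem_inter.mp hv
    exact Finset.mem_inter.mpr ⟨hv'.2, H.inc_sub e h.1 hv'.1⟩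
  inc_card := fun e he => (Finset.mem_filter.mp he).2

/-- `H ÷ v`: shrinking `H` to `V(H) \ {v}`. -/
def shrinkDel (H : NHypergraph) (v : ℕ) : NHypergraph := H.shrink (H.V.erase v)

/-- `H - X`: deleting a vertex set. -/
def delete (H : NHypergraph) (X : Finset ℕ) : NHypergraph := H.induce (H.V \ X)

/-- Multiplicity: number of ordinary edges with incidence set exactly `{u,v}`. -/
def mult (H : NHypergraph) (u v : ℕ) : ℕ :=
  (H.E.filter (fun e => H.inc e = {u, v})).card

/-- Connectedness. -/
def Connected (H : NHypergraph) : Prop :=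
  H.V.Nonempty ∧ ∀ X ⊆ H.V, X.Nonempty → X ≠ H.V →
    ∃ e ∈ H.E, (H.inc e ∩ X).Nonempty ∧ (H.inc e \ X).Nonempty

/-- `H` is strictly `h`-degenerate. -/
def StrictlyDeg (H : NHypergraph) (h : ℕ → ℕ) : Prop :=
  ∀ G : NHypergraph, G.IsSub H → G.V.Nonempty → ∃ v ∈ G.V, G.deg v < h v

/-- `P` describes a `p`-partition of the vertex set of `H`. -/
def IsPartition (H : NHypergraph) {p : ℕ} (P : Fin p → Finset ℕ) : Prop :=
  (∀ i, P i ⊆ H.V) ∧ (∀ i j, i ≠ j → Disjoint (P i) (P j)) ∧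
    ∀ v ∈ H.V, ∃ i, v ∈ P i

/-- `P` describes an `f`-partition of `H`. -/
def IsFPartition (H : NHypergraph) {p : ℕ} (f : Fin p → ℕ → ℕ)
    (P : Fin p → Finset ℕ) : Prop :=
  H.IsPartition P ∧ ∀ i, (H.induce (P i)).StrictlyDeg (f i)

/-- `H` admits an `f`-partition. -/
def Partitionable (H : NHypergraph) {p : ℕ} (f : Fin p → ℕ → ℕ) : Prop :=
  ∃ P : Fin p → Finset ℕ, H.IsFPartition f P

/-- `v` is a separating vertex of `H`. -/
def Separating (H : NHypergraph) (v : ℕ) : Prop :=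
  ∃ X₁ X₂ : Finset ℕ, X₁ ∪ X₂ = H.V ∧ X₁ ∩ X₂ = {v} ∧
    2 ≤ X₁.card ∧ 2 ≤ X₂.card ∧
    ∀ e ∈ H.E, H.inc e ⊆ X₁ ∨ H.inc e ⊆ X₂

/-- `H` is (equal to) `tKₙ`: the complete graph on `n` vertices with each
edge replaced by `t` parallel edges. -/
def IsTimesComplete (H : NHypergraph) (t n : ℕ) : Prop :=
  H.V.card = n ∧ (∀ e ∈ H.E, (H.inc e).card = 2) ∧
    ∀ u ∈ H.V, ∀ v ∈ H.V, u ≠ v → H.mult u v = t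

/-- `H` is (equal to) `tCₙ`: the cycle of length `n` with each edge replaced
by `t` parallel edges. -/
def IsTimesCycle (H : NHypergraph) (t n : ℕ) : Prop :=
  3 ≤ n ∧ ∃ c : ℕ → ℕ,
    (∀ k l, k < n → l < n → c k = c l → k = l) ∧
    H.V = (Finset.range n).image c ∧
    (∀ e ∈ H.E, (H.inc e).card = 2) ∧
    (∀ k < n, H.mult (c k) (c ((k + 1) % n)) = t) ∧
    (∀ e ∈ H.E, ∃ k < n, H.inc e = {c k, c ((k + 1) % n)})

/-- Maximum degree. -/
def maxDeg (H : NHypergraph) : ℕ := H.V.sup H.deg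

/-- Coloring number: the least `k` such that `H` is strictly `k`-degenerate. -/
noncomputable def colNum (H : NHypergraph) : ℕ :=
  sInf {k : ℕ | H.StrictlyDeg (fun _ => k)}

end NHypergraph
theorem strictly_degenerate_of_proper_sub (H : NHypergraph) (h : ℕ → ℕ)
    (hconn : H.Connected) (hdeg : ∀ v ∈ H.V, H.deg v = h v)
    (H' : NHypergraph) (hsub : H'.IsSub H)
    (hproper : ¬(H'.V = H.V ∧ H'.E = H.E)) :
    H'.StrictlyDeg h := by
  intro G hGsub hGne
  by_contra hcon
  push_neg at hcon
  -- G is a subhypergraph of H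
  have hGE : G.E ⊆ H.E := fun e he => hsub.2.1 (hGsub.2.1 he)
  have hGV : G.V ⊆ H.V := fun v hv => hsub.1 (hGsub.1 hv)
  have hGinc : ∀ e ∈ G.E, G.inc e = H.inc e := fun e he => by
    rw [hGsub.2.2 e he, hsub.2.2 e (hGsub.2.1 he)]
  -- the filtered edge sets
  have hfsub : ∀ v, (G.E.filter (fun e => v ∈ G.inc e)) ⊆
      (H.E.filter (fun e => v ∈ H.inc e)) := by
    intro v e he
    rw [Finset.mem_filter] at he ⊢
    exact ⟨hGE he.1, (hGinc e he.1) ▸ he.2⟩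
  have hfeq : ∀ v ∈ G.V, (G.E.filter (fun e => v ∈ G.inc e)) =
      (H.E.filter (fun e => v ∈ H.inc e)) := by
    intro v hv
    apply Finset.eq_of_subset_of_card_le (hfsub v)
    have h1 : h v ≤ G.deg v := hcon v hv
    have h2 : H.deg v = h v := hdeg v (hGV hv)
    calc (H.E.filter (fun e => v ∈ H.inc e)).card = H.deg v := rfl
      _ ≤ G.deg v := by omega
      _ = (G.E.filter (fun e => v ∈ G.inc e)).card := rfl
  by_cases hV : G.V = H.V
  · -- then H'.V = H.V, so H'.E ≠ H.E; get a missing edge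
    have hV' : H'.V = H.V :=
      Finset.Subset.antisymm hsub.1 (hV ▸ hGsub.1)
    have hE' : H'.E ≠ H.E := fun hE => hproper ⟨hV', hE⟩
    obtain ⟨e₀, he₀H, he₀G⟩ : ∃ e ∈ H.E, e ∉ H'.E := by
      by_contra hc
      push_neg at hc
      exact hE' (Finset.Subset.antisymm hsub.2.1 hc)
    obtain ⟨v, hv⟩ : (H.inc e₀).Nonempty :=
      Finset.card_pos.mp (by have := H.inc_card e₀ he₀H; omega)
    have hvG : v ∈ G.V := hV ▸ (H.inc_sub e₀ he₀H hv)
    have : e₀ ∈ G.E.filter (fun e => v ∈ G.inc e) := by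
      rw [hfeq v hvG, Finset.mem_filter]; exact ⟨he₀H, hv⟩
    exact he₀G (hGsub.2.1 (Finset.mem_filter.mp this).1)
  · -- use connectivity with X = G.V
    obtain ⟨e, heE, ⟨v, hv⟩, ⟨u, hu⟩⟩ := hconn.2 G.V hGV hGne hV
    rw [Finset.mem_inter] at hv
    rw [Finset.mem_sdiff] at hu
    have heG : e ∈ G.E := by
      have : e ∈ G.E.filter (fun e => v ∈ G.inc e) := by
        rw [hfeq v hv.2, Finset.mem_filter]; exact ⟨heE, hv.1⟩
      exact (Finset.mem_filter.mp this).1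
    exact hu.2 (G.inc_sub e heG ((hGinc e heG) ▸ hu.1))
end

section
/- Let H = tK_n be the complete graph K_n (n ≥ 3) with each edge replaced by t ≥ 1 parallel edges, and let n_1, …, n_p ≥ 0 be integers with n_1 + … + n_p = n − 1 and at least two n_i nonzero. Define f = (f_1, …, f_p) by f(v) = (t·n_1, …, t·n_p) for every vertex v. Then H admits no f-partition, i.e., there is no partition (H_1, …, H_p) of H into induced subgraphs such that each H_i is strictly f_i-degenerate. -/
/-- A hypergraph with vertices and edge labels drawn from ℕ. -/
structure NatHypergraph where
  V : Finset ℕ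
  E : Finset ℕ
  inc : ℕ → Finset ℕ
  inc_sub : ∀ e ∈ E, inc e ⊆ V
  inc_card : ∀ e ∈ E, 2 ≤ (inc e).card

namespace NatHypergraph

/-- Degree of a vertex. -/
def deg (H : NatHypergraph) (v : ℕ) : ℕ := (H.E.filter (fun e => v ∈ H.inc e)).card

/-- `G` is a subhypergraph of `H`. -/
def IsSub (G H : NatHypergraph) : Prop :=
  G.V ⊆ H.V ∧ G.E ⊆ H.E ∧ ∀ e ∈ G.E, G.inc e = H.inc e

/-- The subhypergraph induced by a vertex set `X`. -/
def induce (H : NatHypergraph) (X : Finset ℕ) : NatHypergraph where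
  V := X ∩ H.V
  E := H.E.filter (fun e => H.inc e ⊆ X)
  inc := H.inc
  inc_sub := fun e he => by
    have h := Finset.mem_filter.mp he
    exact Finset.subset_inter h.2 (H.inc_sub e h.1)
  inc_card := fun e he => H.inc_card e (Finset.mem_filter.mp he).1

/-- The hypergraph obtained by shrinking `H` to `X`. -/
def shrink (H : NatHypergraph) (X : Finset ℕ) : NatHypergraph where
  V := X ∩ H.V
  E := H.E.filter (fun e => 2 ≤ (H.inc e ∩ X).card)
  inc := fun e => H.inc e ∩ X
  inc_sub := fun e he => by
    have h := Finset.mem_filter.mp he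
    intro v hv
    have hv' := Finset.mem_inter.mp hv
    exact Finset.mem_inter.mpr ⟨hv'.2, H.inc_sub e h.1 hv'.1⟩
  inc_card := fun e he => (Finset.mem_filter.mp he).2

/-- `H ÷ v`: shrinking `H` to `V(H) \ {v}`. -/
def shrinkDel (H : NatHypergraph) (v : ℕ) : NatHypergraph := H.shrink (H.V.erase v)

/-- `H - X`: deleting a vertex set. -/
def delete (H : NatHypergraph) (X : Finset ℕ) : NatHypergraph := H.induce (H.V \ X)

/-- Multiplicity: number of ordinary edges with incidence set exactly `{u,v}`. -/
def mult (H : NatHypergraph) (u v : ℕ) : ℕ :=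
  (H.E.filter (fun e => H.inc e = {u, v})).card

/-- Connectedness. -/
def Connected (H : NatHypergraph) : Prop :=
  H.V.Nonempty ∧ ∀ X ⊆ H.V, X.Nonempty → X ≠ H.V →
    ∃ e ∈ H.E, (H.inc e ∩ X).Nonempty ∧ (H.inc e \ X).Nonempty

/-- `H` is strictly `h`-degenerate. -/
def StrictlyDeg (H : NatHypergraph) (h : ℕ → ℕ) : Prop :=
  ∀ G : NatHypergraph, G.IsSub H → G.V.Nonempty → ∃ v ∈ G.V, G.deg v < h v

/-- `P` describes a `p`-partition of the vertex set of `H`. -/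
def IsPartition (H : NatHypergraph) {p : ℕ} (P : Fin p → Finset ℕ) : Prop :=
  (∀ i, P i ⊆ H.V) ∧ (∀ i j, i ≠ j → Disjoint (P i) (P j)) ∧
    ∀ v ∈ H.V, ∃ i, v ∈ P i

/-- `P` describes an `f`-partition of `H`. -/
def IsFPartition (H : NatHypergraph) {p : ℕ} (f : Fin p → ℕ → ℕ)
    (P : Fin p → Finset ℕ) : Prop :=
  H.IsPartition P ∧ ∀ i, (H.induce (P i)).StrictlyDeg (f i)

/-- `H` admits an `f`-partition. -/
def Partitionable (H : NatHypergraph) {p : ℕ} (f : Fin p → ℕ → ℕ) : Prop :=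
  ∃ P : Fin p → Finset ℕ, H.IsFPartition f P

/-- `v` is a separating vertex of `H`. -/
def Separating (H : NatHypergraph) (v : ℕ) : Prop :=
  ∃ X₁ X₂ : Finset ℕ, X₁ ∪ X₂ = H.V ∧ X₁ ∩ X₂ = {v} ∧
    2 ≤ X₁.card ∧ 2 ≤ X₂.card ∧
    ∀ e ∈ H.E, H.inc e ⊆ X₁ ∨ H.inc e ⊆ X₂

/-- `H` is (equal to) `tKₙ`: the complete graph on `n` vertices with each
edge replaced by `t` parallel edges. -/
def IsTimesComplete (H : NatHypergraph) (t n : ℕ) : Prop :=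
  H.V.card = n ∧ (∀ e ∈ H.E, (H.inc e).card = 2) ∧
    ∀ u ∈ H.V, ∀ v ∈ H.V, u ≠ v → H.mult u v = t

/-- `H` is (equal to) `tCₙ`: the cycle of length `n` with each edge replaced
by `t` parallel edges. -/
def IsTimesCycle (H : NatHypergraph) (t n : ℕ) : Prop :=
  3 ≤ n ∧ ∃ c : ℕ → ℕ,
    (∀ k l, k < n → l < n → c k = c l → k = l) ∧
    H.V = (Finset.range n).image c ∧
    (∀ e ∈ H.E, (H.inc e).card = 2) ∧
    (∀ k < n, H.mult (c k) (c ((k + 1) % n)) = t) ∧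
    (∀ e ∈ H.E, ∃ k < n, H.inc e = {c k, c ((k + 1) % n)})

/-- Maximum degree. -/
def maxDeg (H : NatHypergraph) : ℕ := H.V.sup H.deg

/-- Coloring number: the least `k` such that `H` is strictly `k`-degenerate. -/
noncomputable def colNum (H : NatHypergraph) : ℕ :=
  sInf {k : ℕ | H.StrictlyDeg (fun _ => k)}

end NatHypergraph

lemma induce_deg_ge (H : NatHypergraph) (t : ℕ)
    (hmult : ∀ u ∈ H.V, ∀ w ∈ H.V, u ≠ w → H.mult u w = t)
    (X : Finset ℕ) (hX : X ⊆ H.V) (v : ℕ) (hv : v ∈ X) :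
    t * (X.card - 1) ≤ (H.induce X).deg v := by
  have hdisj : ∀ u ∈ X.erase v, ∀ u' ∈ X.erase v, u ≠ u' →
      Disjoint (H.E.filter (fun e => H.inc e = {v, u}))
        (H.E.filter (fun e => H.inc e = {v, u'})) := by
    intro u hu u' hu' huu'
    rw [Finset.disjoint_left]
    intro e he he'
    have h1 := (Finset.mem_filter.mp he).2
    have h2 := (Finset.mem_filter.mp he').2
    have : (u : ℕ) ∈ ({v, u'} : Finset ℕ) := by
      rw [← h2, h1]; simp
    rcases Finset.mem_insert.mp this with h | h
    · exact absurd h (Finset.ne_of_mem_erase hu)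
    · exact huu' (by simpa using h)
  have hsub : (X.erase v).biUnion (fun u => H.E.filter (fun e => H.inc e = {v, u}))
      ⊆ (H.induce X).E.filter (fun e => v ∈ (H.induce X).inc e) := by
    intro e he
    obtain ⟨u, hu, he'⟩ := Finset.mem_biUnion.mp he
    obtain ⟨heE, hinc⟩ := Finset.mem_filter.mp he'
    refine Finset.mem_filter.mpr ⟨Finset.mem_filter.mpr ⟨heE, ?_⟩, ?_⟩
    · show H.inc e ⊆ X
      rw [hinc]
      exact Finset.insert_subset hv (Finset.singleton_subset_iff.mpr (Finset.mem_of_mem_erase hu))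
    · show v ∈ H.inc e
      rw [hinc]; simp
  have hcard := Finset.card_le_card hsub
  rw [Finset.card_biUnion hdisj] at hcard
  have hsum : ∑ u ∈ X.erase v, (H.E.filter (fun e => H.inc e = {v, u})).card
      = ∑ u ∈ X.erase v, t := by
    refine Finset.sum_congr rfl fun u hu => ?_
    have : H.mult v u = t :=
      hmult v (hX hv) u (hX (Finset.mem_of_mem_erase hu))
        (Ne.symm (Finset.ne_of_mem_erase hu))
    simpa [NatHypergraph.mult] using this
  rw [hsum, Finset.sum_const, Finset.card_erase_of_mem hv, smul_eq_mul, mul_comm] at hcard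
  exact hcard

theorem timesComplete_not_partitionable (H : NatHypergraph) (t n : ℕ)
    (ht : 1 ≤ t) (hn : 3 ≤ n) (hH : H.IsTimesComplete t n)
    {p : ℕ} (nn : Fin p → ℕ)
    (hsum : ∑ i, nn i = n - 1)
    (htwo : ∃ i j, i ≠ j ∧ nn i ≠ 0 ∧ nn j ≠ 0)
    (f : Fin p → ℕ → ℕ) (hf : ∀ i, ∀ v ∈ H.V, f i v = t * nn i) :
    ¬ H.Partitionable f := by
  rintro ⟨P, ⟨hPsub, hPdisj, hPcov⟩, hdeg⟩
  obtain ⟨hcardV, hinc2, hmult⟩ := hH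
  have hle : ∀ i, (P i).card ≤ nn i := by
    intro i
    rcases (P i).eq_empty_or_nonempty with h | h
    · simp [h]
    · have hVi : (H.induce (P i)).V = P i := by
        simp [NatHypergraph.induce, Finset.inter_eq_left.mpr (hPsub i)]
      obtain ⟨v, hv, hvd⟩ := hdeg i (H.induce (P i))
        ⟨subset_rfl, subset_rfl, fun e _ => rfl⟩ (by rw [hVi]; exact h)
      rw [hVi] at hv
      have hvV : v ∈ H.V := hPsub i hv
      rw [hf i v hvV] at hvd
      have hge := induce_deg_ge H t hmult (P i) (hPsub i) v hv
      have : t * ((P i).card - 1) < t * nn i := lt_of_le_of_lt hge hvd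
      have hlt := Nat.lt_of_mul_lt_mul_left this
      have hc1 : 1 ≤ (P i).card := Finset.card_pos.mpr h
      omega
  have hV : H.V = Finset.univ.biUnion P := by
    apply Finset.Subset.antisymm
    · intro v hv
      obtain ⟨i, hi⟩ := hPcov v hv
      exact Finset.mem_biUnion.mpr ⟨i, Finset.mem_univ i, hi⟩
    · intro v hv
      obtain ⟨i, _, hi⟩ := Finset.mem_biUnion.mp hv
      exact hPsub i hi
  have hcard : n = ∑ i, (P i).card := by
    rw [← hcardV, hV, Finset.card_biUnion
      (fun i _ j _ hij => hPdisj i j hij)]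
  have : n ≤ n - 1 := by
    calc n = ∑ i, (P i).card := hcard
    _ ≤ ∑ i, nn i := Finset.sum_le_sum fun i _ => hle i
    _ = n - 1 := hsum
  omega
end

section
/- Let H = tC_n where C_n is a cycle of odd length n ≥ 5 and t ≥ 1, and let k ≠ ℓ be indices in {1,…,p}. Define f by f_i(v) = t if i ∈ {k, ℓ} and f_i(v) = 0 otherwise, for all vertices v. Then H admits no f-partition. -/
/-- If the induced subgraph on `X` is strictly `h`-degenerate with `h ≤ t` on
`H.V`, then `X` cannot fully contain an edge of multiplicity `t`. -/
lemma edge_not_mono (H : NatHypergraph) (t : ℕ) (X : Finset ℕ) (h : ℕ → ℕ)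
    (hdeg : (H.induce X).StrictlyDeg h) (hh : ∀ v ∈ H.V, h v ≤ t)
    (e : ℕ) (he : e ∈ H.E) (hsub : H.inc e ⊆ X)
    (hc : (H.E.filter (fun e' => H.inc e' = H.inc e)).card = t) : False := by
  set G : NatHypergraph :=
    { V := H.inc e
      E := H.E.filter (fun e' => H.inc e' = H.inc e)
      inc := H.inc
      inc_sub := fun e' he' => by
        rw [(Finset.mem_filter.mp he').2]
      inc_card := fun e' he' => H.inc_card e' (Finset.mem_filter.mp he').1 }
    with hG
  have hGsub : G.IsSub (H.induce X) := by
    refine ⟨?_, ?_, fun _ _ => rfl⟩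
    · exact Finset.subset_inter hsub (H.inc_sub e he)
    · intro e' he'
      have h' := Finset.mem_filter.mp he'
      exact Finset.mem_filter.mpr ⟨h'.1, h'.2 ▸ hsub⟩
  have hne : G.V.Nonempty := by
    have h2 := H.inc_card e he
    have : (H.inc e).Nonempty := Finset.card_pos.mp (by omega)
    exact this
  obtain ⟨v, hv, hlt⟩ := hdeg G hGsub hne
  have hdv : G.deg v = t := by
    unfold NatHypergraph.deg
    rw [Finset.filter_true_of_mem, hc]
    intro e' he'
    have h' := Finset.mem_filter.mp he'
    show v ∈ G.inc e'
    show v ∈ H.inc e'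
    rw [h'.2]; exact hv
  have hvV : v ∈ H.V := H.inc_sub e he hv
  have := hh v hvV
  omega

/-- An odd cycle cannot be properly 2-colored. -/
lemma odd_cycle_two_color (n : ℕ) (hn : 3 ≤ n) (hodd : Odd n)
    (A B : ℕ → Prop)
    (cover : ∀ j < n, A j ∨ B j)
    (hA : ∀ j < n, ¬(A j ∧ A ((j + 1) % n)))
    (hB : ∀ j < n, ¬(B j ∧ B ((j + 1) % n))) : False := by
  have key : A 0 → False := by
    intro hA0
    have main : ∀ j, j < n → ((Even j → A j) ∧ (¬Even j → B j)) := by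
      intro j
      induction j with
      | zero => exact fun _ => ⟨fun _ => hA0, fun h => absurd (Even.zero) h⟩
      | succ m ih =>
        intro hmn
        have hm : m < n := by omega
        have hmod : (m + 1) % n = m + 1 := Nat.mod_eq_of_lt hmn
        constructor
        · intro hev
          have : ¬ Even m := Nat.even_add_one.mp hev
          have hBm := (ih hm).2 this
          have : ¬ B (m + 1) := fun hb => hB m hm ⟨hBm, by rwa [hmod]⟩
          exact (cover (m + 1) hmn).resolve_right this
        · intro hev
          have : Even m := by simpa [Nat.even_add_one] using hev
          have hAm := (ih hm).1 this
          have : ¬ A (m + 1) := fun ha => hA m hm ⟨hAm, by rwa [hmod]⟩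
          exact (cover (m + 1) hmn).resolve_left this
    have hn1 : n - 1 < n := by omega
    have hev : Even (n - 1) := by
      rcases hodd with ⟨c, hc⟩
      exact ⟨c, by omega⟩
    have hAn1 : A (n - 1) := (main (n - 1) hn1).1 hev
    have hmod : (n - 1 + 1) % n = 0 := by
      have : n - 1 + 1 = n := by omega
      rw [this, Nat.mod_self]
    exact hA (n - 1) hn1 ⟨hAn1, hmod ▸ hA0⟩
  have keyB : B 0 → False := by
    intro hB0
    -- symmetric: swap A and B
    have main : ∀ j, j < n → ((Even j → B j) ∧ (¬Even j → A j)) := by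
      intro j
      induction j with
      | zero => exact fun _ => ⟨fun _ => hB0, fun h => absurd (Even.zero) h⟩
      | succ m ih =>
        intro hmn
        have hm : m < n := by omega
        have hmod : (m + 1) % n = m + 1 := Nat.mod_eq_of_lt hmn
        constructor
        · intro hev
          have : ¬ Even m := Nat.even_add_one.mp hev
          have hAm := (ih hm).2 this
          have : ¬ A (m + 1) := fun ha => hA m hm ⟨hAm, by rwa [hmod]⟩
          exact (cover (m + 1) hmn).resolve_left this
        · intro hev
          have hEm : Even m := by simpa [Nat.even_add_one] using hev
          have hBm := (ih hm).1 hEm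
          have : ¬ B (m + 1) := fun hb => hB m hm ⟨hBm, by rwa [hmod]⟩
          exact (cover (m + 1) hmn).resolve_right this
    have hn1 : n - 1 < n := by omega
    have hev : Even (n - 1) := by
      rcases hodd with ⟨c, hc⟩
      exact ⟨c, by omega⟩
    have hBn1 : B (n - 1) := (main (n - 1) hn1).1 hev
    have hmod : (n - 1 + 1) % n = 0 := by
      have : n - 1 + 1 = n := by omega
      rw [this, Nat.mod_self]
    exact hB (n - 1) hn1 ⟨hBn1, hmod ▸ hB0⟩
  rcases cover 0 (by omega) with h | h
  · exact key h
  · exact keyB h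

theorem timesCycle_not_partitionable (H : NatHypergraph) (t n : ℕ)
    (ht : 1 ≤ t) (hn : 5 ≤ n) (hodd : Odd n) (hH : H.IsTimesCycle t n)
    {p : ℕ} (k l : Fin p) (hkl : k ≠ l)
    (f : Fin p → ℕ → ℕ)
    (hf : ∀ i, ∀ v ∈ H.V, f i v = if i = k ∨ i = l then t else 0) :
    ¬ H.Partitionable f := by
  rintro ⟨P, ⟨⟨hPsub, hPdisj, hPcov⟩, hstrict⟩⟩
  obtain ⟨hn3, c, hcinj, hV, hcard2, hmult, hedges⟩ := hH
  -- vertices lie in P k or P l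
  have hcover : ∀ v ∈ H.V, v ∈ P k ∨ v ∈ P l := by
    intro v hv
    obtain ⟨i, hi⟩ := hPcov v hv
    by_cases hik : i = k
    · exact Or.inl (hik ▸ hi)
    by_cases hil : i = l
    · exact Or.inr (hil ▸ hi)
    exfalso
    have hne : ((H.induce (P i)).V).Nonempty :=
      ⟨v, Finset.mem_inter.mpr ⟨hi, hv⟩⟩
    obtain ⟨w, hw, hlt⟩ := hstrict i (H.induce (P i)) ⟨le_refl _, le_refl _, fun _ _ => rfl⟩ hne
    have hwV : w ∈ H.V := (Finset.mem_inter.mp hw).2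
    rw [hf i w hwV] at hlt
    simp [hik, hil] at hlt
  -- no cycle edge inside P k (resp. P l)
  have key : ∀ i : Fin p, (i = k ∨ i = l) → ∀ j < n,
      ¬(c j ∈ P i ∧ c ((j + 1) % n) ∈ P i) := by
    rintro i hi j hj ⟨h1, h2⟩
    have hm := hmult j hj
    unfold NatHypergraph.mult at hm
    have hpos : (H.E.filter (fun e => H.inc e = {c j, c ((j + 1) % n)})).Nonempty :=
      Finset.card_pos.mp (by omega)
    obtain ⟨e, he⟩ := hpos
    have heE : e ∈ H.E := (Finset.mem_filter.mp he).1
    have hinc : H.inc e = {c j, c ((j + 1) % n)} := (Finset.mem_filter.mp he).2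
    refine edge_not_mono H t (P i) (f i) (hstrict i) ?_ e heE ?_ ?_
    · intro v hv
      rw [hf i v hv]
      simp [hi]
    · rw [hinc]
      intro x hx
      rcases Finset.mem_insert.mp hx with h | h
      · exact h ▸ h1
      · exact (Finset.mem_singleton.mp h) ▸ h2
    · simp only [hinc]
      exact hm
  -- 2-coloring of odd cycle
  refine odd_cycle_two_color n hn3 hodd (fun j => c j ∈ P k) (fun j => c j ∈ P l)
    ?_ (key k (Or.inl rfl)) (key l (Or.inr rfl))
  intro j hj
  apply hcover
  rw [hV]
  exact Finset.mem_image.mpr ⟨j, Finset.mem_range.mpr hj, rfl⟩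
end

section
/- Let (H,f) be a non-partitionable pair of dimension p: H is connected, f = (f_1,…,f_p) with f_1(v) + … + f_p(v) ≥ d_H(v) for all v ∈ V(H), and H has no f-partition. Let z be a non-separating vertex of H and j an index with f_j(z) ≠ 0. Define H' = H ÷ z and f' by f'_j(v) = max{0, f_j(v) − μ_H(z,v)} and f'_i(v) = f_i(v) for i ≠ j. Then (H', f') is again a non-partitionable pair: H' is connected, f'_1(v) + … + f'_p(v) ≥ d_{H'}(v) for all v ∈ V(H'), and H' has no f'-partition. -/
namespace NHypergraph

lemma shrinkDel_V' (H : NHypergraph) (z : ℕ) : (H.shrinkDel z).V = H.V.erase z :=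
  Finset.inter_eq_left.mpr (Finset.erase_subset _ _)

lemma mem_shrinkDel_E {H : NHypergraph} {z e : ℕ} :
    e ∈ (H.shrinkDel z).E ↔ e ∈ H.E ∧ 2 ≤ (H.inc e ∩ H.V.erase z).card := Finset.mem_filter

lemma shrinkDel_inc' (H : NHypergraph) (z e : ℕ) :
    (H.shrinkDel z).inc e = H.inc e ∩ H.V.erase z := rfl

lemma isSub_shrink_induce {H G : NHypergraph} {z : ℕ} {Q : Finset ℕ}
    (hQ : Q ⊆ H.V.erase z) (hG : G.IsSub (H.induce Q)) :
    G.IsSub ((H.shrinkDel z).induce Q) := by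
  obtain ⟨hV, hE, hinc⟩ := hG
  refine ⟨?_, ?_, ?_⟩
  · intro v hv
    have h1 : v ∈ Q ∩ H.V := hV hv
    rw [Finset.mem_inter] at h1
    show v ∈ Q ∩ (H.shrinkDel z).V
    rw [shrinkDel_V', Finset.mem_inter]
    exact ⟨h1.1, hQ h1.1⟩
  · intro e he
    have h1 : e ∈ H.E ∧ H.inc e ⊆ Q := Finset.mem_filter.mp (hE he)
    have hsub : H.inc e ⊆ H.V.erase z := h1.2.trans hQ
    have hint : H.inc e ∩ H.V.erase z = H.inc e := Finset.inter_eq_left.mpr hsub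
    show e ∈ (H.shrinkDel z).E.filter (fun e => (H.shrinkDel z).inc e ⊆ Q)
    rw [Finset.mem_filter, mem_shrinkDel_E, shrinkDel_inc', hint]
    exact ⟨⟨h1.1, hint ▸ H.inc_card e h1.1⟩, h1.2⟩
  · intro e he
    have h1 : e ∈ H.E ∧ H.inc e ⊆ Q := Finset.mem_filter.mp (hE he)
    have hsub : H.inc e ⊆ H.V.erase z := h1.2.trans hQ
    have hint : H.inc e ∩ H.V.erase z = H.inc e := Finset.inter_eq_left.mpr hsub
    show G.inc e = H.inc e ∩ H.V.erase z
    rw [hint]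
    exact hinc e he

end NHypergraph

open NHypergraph
theorem shrink_nonpartitionable (H : NHypergraph) {p : ℕ} (f : Fin p → ℕ → ℕ)
    (hconn : H.Connected) (hdeg : ∀ v ∈ H.V, H.deg v ≤ ∑ i, f i v)
    (hnp : ¬ H.Partitionable f)
    (z : ℕ) (hz : z ∈ H.V) (hzsep : ¬ H.Separating z)
    (j : Fin p) (hj : f j z ≠ 0)
    (f' : Fin p → ℕ → ℕ)
    (hf'j : ∀ v, f' j v = f j v - H.mult z v)
    (hf'i : ∀ i, i ≠ j → ∀ v, f' i v = f i v) :
    (H.shrinkDel z).Connected ∧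
      (∀ v ∈ (H.shrinkDel z).V, (H.shrinkDel z).deg v ≤ ∑ i, f' i v) ∧
      ¬ (H.shrinkDel z).Partitionable f' := by
  classical
  have hzV' : z ∉ H.V.erase z := Finset.notMem_erase z H.V
  -- Step 1: V \ {z} is nonempty
  have hVne : (H.V.erase z).Nonempty := by
    by_contra hemp
    rw [Finset.not_nonempty_iff_eq_empty] at hemp
    have hall : ∀ v ∈ H.V, v = z := by
      intro v hv
      by_contra hvz
      exact absurd (hemp ▸ Finset.mem_erase.mpr ⟨hvz, hv⟩) (Finset.notMem_empty v)
    apply hnp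
    refine ⟨fun i => if i = j then {z} else ∅, ⟨⟨?_, ?_, ?_⟩, ?_⟩⟩
    · intro i
      dsimp only
      split_ifs with h
      · exact Finset.singleton_subset_iff.mpr hz
      · exact Finset.empty_subset _
    · intro i k hik
      dsimp only
      split_ifs with h1 h2 h2
      · exact absurd (h1.trans h2.symm) hik
      · simp
      · simp
      · simp
    · intro v hv
      exact ⟨j, by simp [hall v hv]⟩
    · intro i
      by_cases hij : i = j
      · have hPi : (fun i => if i = j then ({z} : Finset ℕ) else ∅) i = {z} := by
          simp [hij]
        rw [hPi]
        intro G hG hGne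
        have hGV : G.V ⊆ {z} := hG.1.trans (Finset.inter_subset_left)
        obtain ⟨w, hw⟩ := hGne
        have hwz : w = z := Finset.mem_singleton.mp (hGV hw)
        refine ⟨w, hw, ?_⟩
        have hE0 : G.E = ∅ := by
          rw [Finset.eq_empty_iff_forall_notMem]
          intro e he
          have h2 := G.inc_card e he
          have h1 := Finset.card_le_card ((G.inc_sub e he).trans hGV)
          simp at h1
          omega
        have hd0 : G.deg w = 0 := by
          unfold NHypergraph.deg
          rw [hE0, Finset.filter_empty, Finset.card_empty]
        rw [hd0, hij, hwz]
        exact Nat.pos_of_ne_zero hj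
      · have hPi : (fun i => if i = j then ({z} : Finset ℕ) else ∅) i = ∅ := by
          simp [hij]
        rw [hPi]
        intro G hG hGne
        exfalso
        obtain ⟨w, hw⟩ := hGne
        have := hG.1 hw
        simp [NHypergraph.induce] at this
  -- Step 2: connectivity
  have hCon : (H.shrinkDel z).Connected := by
    constructor
    · rw [shrinkDel_V']; exact hVne
    · intro X hXsub hXne hXV
      rw [shrinkDel_V'] at hXsub hXV
      by_contra hcon
      push_neg at hcon
      apply hzsep
      set Y := H.V.erase z \ X with hY
      have hzX : z ∉ X := fun h => hzV' (hXsub h)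
      have hzYn : z ∉ Y := fun h => hzV' (Finset.mem_sdiff.mp h).1
      have hYne : Y.Nonempty := by
        rw [hY, Finset.sdiff_nonempty]
        intro h
        exact hXV (Finset.Subset.antisymm hXsub h)
      refine ⟨insert z X, insert z Y, ?_, ?_, ?_, ?_, ?_⟩
      · ext v
        simp only [Finset.mem_union, Finset.mem_insert, hY, Finset.mem_sdiff,
          Finset.mem_erase]
        constructor
        · rintro (⟨rfl | h⟩ | ⟨rfl | h⟩)
          · exact hz
          · exact Finset.mem_of_mem_erase (hXsub h)
          · exact hz
          · exact h.1.2
        · intro hv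
          by_cases hvz : v = z
          · exact Or.inl (Or.inl hvz)
          · by_cases hvX : v ∈ X
            · exact Or.inl (Or.inr hvX)
            · exact Or.inr (Or.inr ⟨⟨hvz, hv⟩, hvX⟩)
      · ext v
        simp only [Finset.mem_inter, Finset.mem_insert, Finset.mem_singleton, hY,
          Finset.mem_sdiff, Finset.mem_erase]
        constructor
        · rintro ⟨rfl | h1, h2⟩
          · rfl
          · rcases h2 with rfl | h2
            · rfl
            · exact absurd h1 h2.2
        · rintro rfl
          exact ⟨Or.inl rfl, Or.inl rfl⟩
      · rw [Finset.card_insert_of_notMem hzX]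
        have := Finset.Nonempty.card_pos hXne
        omega
      · rw [Finset.card_insert_of_notMem hzYn]
        have := Finset.Nonempty.card_pos hYne
        omega
      · intro e he
        have hsubV : H.inc e ⊆ H.V := H.inc_sub e he
        set A := H.inc e ∩ H.V.erase z with hA
        have hincA : H.inc e ⊆ insert z A := by
          intro w hw
          by_cases hwz : w = z
          · rw [hwz]
            exact Finset.mem_insert_self _ _
          · exact Finset.mem_insert_of_mem
              (Finset.mem_inter.mpr ⟨hw, Finset.mem_erase.mpr ⟨hwz, hsubV hw⟩⟩)
        by_cases h2A : 2 ≤ A.card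
        · have heE : e ∈ (H.shrinkDel z).E := mem_shrinkDel_E.mpr ⟨he, h2A⟩
          have hc := hcon e heE
          rw [shrinkDel_inc' H z e, ← hA] at hc
          by_cases hAX : (A ∩ X).Nonempty
          · left
            have hnd := hc hAX
            rw [Finset.sdiff_eq_empty_iff_subset] at hnd
            intro w hw
            rcases Finset.mem_insert.mp (hincA hw) with rfl | hwA
            · exact Finset.mem_insert_self _ _
            · exact Finset.mem_insert_of_mem (hnd hwA)
          · right
            rw [Finset.not_nonempty_iff_eq_empty] at hAX
            intro w hw
            rcases Finset.mem_insert.mp (hincA hw) with rfl | hwA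
            · exact Finset.mem_insert_self _ _
            · refine Finset.mem_insert_of_mem ?_
              rw [hY, Finset.mem_sdiff]
              refine ⟨Finset.mem_inter.mp hwA |>.2, ?_⟩
              intro hwX
              exact absurd (hAX ▸ Finset.mem_inter.mpr ⟨hwA, hwX⟩) (Finset.notMem_empty w)
        · rcases Finset.eq_empty_or_nonempty A with hAe | ⟨a, ha⟩
          · left
            intro w hw
            rcases Finset.mem_insert.mp (hincA hw) with rfl | hwA
            · exact Finset.mem_insert_self _ _
            · rw [hAe] at hwA; exact absurd hwA (Finset.notMem_empty w)
          · have hone : ∀ b ∈ A, b = a :=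
              fun b hb => Finset.card_le_one.mp (by omega) b hb a ha
            have haE : a ∈ H.V.erase z := (Finset.mem_inter.mp ha).2
            by_cases haX : a ∈ X
            · left
              intro w hw
              rcases Finset.mem_insert.mp (hincA hw) with rfl | hwA
              · exact Finset.mem_insert_self _ _
              · exact Finset.mem_insert_of_mem ((hone w hwA) ▸ haX)
            · right
              intro w hw
              rcases Finset.mem_insert.mp (hincA hw) with rfl | hwA
              · exact Finset.mem_insert_self _ _
              · refine Finset.mem_insert_of_mem ?_
                rw [hY, Finset.mem_sdiff]
                exact (hone w hwA) ▸ ⟨haE, haX⟩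
  refine ⟨hCon, ?_, ?_⟩
  -- Step 3: degree bound
  · intro v hv
    rw [shrinkDel_V'] at hv
    have hvV : v ∈ H.V := Finset.mem_of_mem_erase hv
    have hvz : v ≠ z := Finset.ne_of_mem_erase hv
    have h1 : (H.shrinkDel z).deg v + H.mult z v ≤ H.deg v := by
      set s1 := (H.shrinkDel z).E.filter (fun e => v ∈ (H.shrinkDel z).inc e) with hs1
      set s2 := H.E.filter (fun e => H.inc e = {z, v}) with hs2
      have hsub1 : s1 ⊆ H.E.filter (fun e => v ∈ H.inc e) := by
        intro e he
        rw [hs1, Finset.mem_filter, mem_shrinkDel_E, shrinkDel_inc'] at he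
        exact Finset.mem_filter.mpr ⟨he.1.1, (Finset.mem_inter.mp he.2).1⟩
      have hsub2 : s2 ⊆ H.E.filter (fun e => v ∈ H.inc e) := by
        intro e he
        rw [hs2, Finset.mem_filter] at he
        refine Finset.mem_filter.mpr ⟨he.1, ?_⟩
        rw [he.2]
        simp
      have hdisj : Disjoint s1 s2 := by
        rw [Finset.disjoint_left]
        intro e he1 he2
        rw [hs1, Finset.mem_filter, mem_shrinkDel_E] at he1
        rw [hs2, Finset.mem_filter] at he2
        have hcard : (H.inc e ∩ H.V.erase z).card ≤ 1 := by
          have hsub : H.inc e ∩ H.V.erase z ⊆ {v} := by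
            intro w hw
            rw [Finset.mem_inter, he2.2, Finset.mem_insert, Finset.mem_singleton] at hw
            rcases hw.1 with rfl | rfl
            · exact absurd hw.2 hzV'
            · exact Finset.mem_singleton_self w
          have := Finset.card_le_card hsub
          simpa using this
        omega
      calc (H.shrinkDel z).deg v + H.mult z v = s1.card + s2.card := rfl
        _ = (s1 ∪ s2).card := (Finset.card_union_of_disjoint hdisj).symm
        _ ≤ (H.E.filter (fun e => v ∈ H.inc e)).card :=
            Finset.card_le_card (Finset.union_subset hsub1 hsub2)
        _ = H.deg v := rfl
    have h2 := hdeg v hvV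
    have h3 : f j v + ∑ i ∈ Finset.univ.erase j, f i v = ∑ i, f i v :=
      Finset.add_sum_erase Finset.univ (fun i => f i v) (Finset.mem_univ j)
    have h4 : f' j v + ∑ i ∈ Finset.univ.erase j, f' i v = ∑ i, f' i v :=
      Finset.add_sum_erase Finset.univ (fun i => f' i v) (Finset.mem_univ j)
    have h5 : ∑ i ∈ Finset.univ.erase j, f' i v = ∑ i ∈ Finset.univ.erase j, f i v :=
      Finset.sum_congr rfl (fun i hi => hf'i i (Finset.ne_of_mem_erase hi) v)
    rw [hf'j] at h4
    omega
  -- Step 4: non-partitionability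
  · rintro ⟨P, ⟨hPsub, hPdisj, hPcov⟩, hPdeg⟩
    apply hnp
    have hP : ∀ i, P i ⊆ H.V.erase z := by
      intro i
      have := hPsub i
      rwa [shrinkDel_V'] at this
    refine ⟨fun i => if i = j then insert z (P i) else P i, ⟨⟨?_, ?_, ?_⟩, ?_⟩⟩
    · intro i
      dsimp only
      split_ifs with h
      · exact Finset.insert_subset hz ((hP i).trans (Finset.erase_subset _ _))
      · exact (hP i).trans (Finset.erase_subset _ _)
    · intro i k hik
      have hdik := hPdisj i k hik
      dsimp only
      split_ifs with h1 h2 h2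
      · exact absurd (h1.trans h2.symm) hik
      · rw [Finset.disjoint_insert_left]
        exact ⟨fun h => hzV' (hP k h), hdik⟩
      · rw [Finset.disjoint_insert_right]
        exact ⟨fun h => hzV' (hP i h), hdik⟩
      · exact hdik
    · intro v hv
      by_cases hvz : v = z
      · exact ⟨j, by simp [hvz]⟩
      · obtain ⟨i, hi⟩ := hPcov v (by rw [shrinkDel_V']; exact Finset.mem_erase.mpr ⟨hvz, hv⟩)
        refine ⟨i, ?_⟩
        dsimp only
        split_ifs with h
        · exact Finset.mem_insert_of_mem hi
        · exact hi
    · intro i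
      by_cases hij : i = j
      · have hPi : (fun i => if i = j then insert z (P i) else P i) i = insert z (P i) := by
          simp [hij]
        rw [hPi]
        have hfij : ∀ v, f' i v = f i v - H.mult z v := by rw [hij]; exact hf'j
        have hjz : f i z ≠ 0 := by rw [hij]; exact hj
        intro G hG hGne
        obtain ⟨hGV, hGE, hGinc⟩ := hG
        have hGVsub : G.V ⊆ insert z (P i) ∩ H.V := hGV
        by_cases hU : (G.V.erase z).Nonempty
        · -- shrink G away from z
          set G' := G.shrink (H.V.erase z) with hG'
          have hGincH : ∀ e ∈ G.E, G.inc e = H.inc e := fun e he => hGinc e he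
          have hGEH : ∀ e ∈ G.E, e ∈ H.E ∧ H.inc e ⊆ insert z (P i) :=
            fun e he => Finset.mem_filter.mp (hGE he)
          have hsub : G'.IsSub ((H.shrinkDel z).induce (P i)) := by
            refine ⟨?_, ?_, ?_⟩
            · intro w hw
              have hw' : w ∈ H.V.erase z ∧ w ∈ G.V := Finset.mem_inter.mp hw
              have hwz : w ≠ z := (Finset.mem_erase.mp hw'.1).1
              have hwP : w ∈ P i := by
                rcases Finset.mem_insert.mp (Finset.mem_inter.mp (hGVsub hw'.2)).1 with
                  rfl | h
                · exact absurd rfl hwz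
                · exact h
              show w ∈ P i ∩ (H.shrinkDel z).V
              rw [shrinkDel_V']
              exact Finset.mem_inter.mpr ⟨hwP, hw'.1⟩
            · intro e he
              have he' : e ∈ G.E ∧ 2 ≤ (G.inc e ∩ H.V.erase z).card := Finset.mem_filter.mp he
              have heH := hGEH e he'.1
              have hcard : 2 ≤ (H.inc e ∩ H.V.erase z).card := by
                rw [← hGincH e he'.1]; exact he'.2
              show e ∈ (H.shrinkDel z).E.filter (fun e => (H.shrinkDel z).inc e ⊆ P i)
              rw [Finset.mem_filter, mem_shrinkDel_E, shrinkDel_inc']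
              refine ⟨⟨heH.1, hcard⟩, ?_⟩
              intro w hw
              rw [Finset.mem_inter, Finset.mem_erase] at hw
              rcases Finset.mem_insert.mp (heH.2 hw.1) with rfl | h
              · exact absurd rfl hw.2.1
              · exact h
            · intro e he
              have he' : e ∈ G.E ∧ 2 ≤ (G.inc e ∩ H.V.erase z).card := Finset.mem_filter.mp he
              show G.inc e ∩ H.V.erase z = H.inc e ∩ H.V.erase z
              rw [hGincH e he'.1]
          have hG'ne : G'.V.Nonempty := by
            obtain ⟨w, hw⟩ := hU
            rw [Finset.mem_erase] at hw
            refine ⟨w, ?_⟩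
            show w ∈ H.V.erase z ∩ G.V
            have hwV : w ∈ H.V := (Finset.mem_inter.mp (hGVsub hw.2)).2
            exact Finset.mem_inter.mpr ⟨Finset.mem_erase.mpr ⟨hw.1, hwV⟩, hw.2⟩
          obtain ⟨v, hvU, hdv⟩ := hPdeg i G' hsub hG'ne
          rw [hfij] at hdv
          have hv' : v ∈ H.V.erase z ∧ v ∈ G.V := Finset.mem_inter.mp hvU
          have hvz : v ≠ z := (Finset.mem_erase.mp hv'.1).1
          refine ⟨v, hv'.2, ?_⟩
          -- split the degree of v in G
          set s := G.E.filter (fun e => v ∈ G.inc e) with hs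
          have hsplit := Finset.card_filter_add_card_filter_not
            (s := s) (p := fun e => 2 ≤ (G.inc e ∩ H.V.erase z).card)
          have hAc : (s.filter (fun e => 2 ≤ (G.inc e ∩ H.V.erase z).card)).card
              = G'.deg v := by
            congr 1
            ext e
            rw [hs, Finset.mem_filter, Finset.mem_filter, Finset.mem_filter]
            constructor
            · rintro ⟨⟨he, hv⟩, hcard⟩
              exact ⟨Finset.mem_filter.mpr ⟨he, hcard⟩,
                Finset.mem_inter.mpr ⟨hv, hv'.1⟩⟩
            · rintro ⟨he, hv⟩
              have he' := Finset.mem_filter.mp he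
              exact ⟨⟨he'.1, (Finset.mem_inter.mp hv).1⟩, he'.2⟩
          have hB : s.filter (fun e => ¬ 2 ≤ (G.inc e ∩ H.V.erase z).card) ⊆
              H.E.filter (fun e => H.inc e = {z, v}) := by
            intro e he
            rw [Finset.mem_filter, hs, Finset.mem_filter] at he
            obtain ⟨⟨heG, hve⟩, hcard⟩ := he
            have heH := (hGEH e heG).1
            rw [hGincH e heG] at hve hcard
            have hsubV : H.inc e ⊆ H.V := H.inc_sub e heH
            have h2c : 2 ≤ (H.inc e).card := H.inc_card e heH
            have hvin : v ∈ H.inc e ∩ H.V.erase z :=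
              Finset.mem_inter.mpr ⟨hve, hv'.1⟩
            have hsingle : H.inc e ∩ H.V.erase z = {v} :=
              Finset.eq_singleton_iff_unique_mem.mpr
                ⟨hvin, fun w hw => Finset.card_le_one.mp (by omega) w hw v hvin⟩
            have hzin : z ∈ H.inc e := by
              by_contra hzn
              have hsub' : H.inc e ⊆ H.inc e ∩ H.V.erase z := by
                intro w hw
                refine Finset.mem_inter.mpr ⟨hw, Finset.mem_erase.mpr ⟨?_, hsubV hw⟩⟩
                rintro rfl
                exact hzn hw
              have := Finset.card_le_card hsub'
              rw [hsingle] at this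
              simp at this
              omega
            refine Finset.mem_filter.mpr ⟨heH, ?_⟩
            apply Finset.Subset.antisymm
            · intro w hw
              by_cases hwz : w = z
              · rw [hwz]
                exact Finset.mem_insert_self _ _
              · have : w ∈ H.inc e ∩ H.V.erase z :=
                  Finset.mem_inter.mpr ⟨hw, Finset.mem_erase.mpr ⟨hwz, hsubV hw⟩⟩
                rw [hsingle, Finset.mem_singleton] at this
                subst this
                exact Finset.mem_insert_of_mem (Finset.mem_singleton_self w)
            · intro w hw
              rcases Finset.mem_insert.mp hw with rfl | hw'
              · exact hzin
              · rw [Finset.mem_singleton] at hw'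
                exact hw' ▸ hve
          have hBle := Finset.card_le_card hB
          have hm : (H.E.filter (fun e => H.inc e = {z, v})).card = H.mult z v := rfl
          have hdG : G.deg v = s.card := rfl
          omega
        · -- G.V = {z}
          rw [Finset.not_nonempty_iff_eq_empty] at hU
          obtain ⟨w, hw⟩ := hGne
          have hwz : w = z := by
            by_contra h
            exact absurd (hU ▸ Finset.mem_erase.mpr ⟨h, hw⟩) (Finset.notMem_empty w)
          refine ⟨w, hw, ?_⟩
          have hGVz : G.V ⊆ {z} := by
            intro u hu
            rw [Finset.mem_singleton]
            by_contra h
            exact absurd (hU ▸ Finset.mem_erase.mpr ⟨h, hu⟩) (Finset.notMem_empty u)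
          have hE0 : G.E = ∅ := by
            rw [Finset.eq_empty_iff_forall_notMem]
            intro e he
            have h2 := G.inc_card e he
            have h1 := Finset.card_le_card ((G.inc_sub e he).trans hGVz)
            simp at h1
            omega
          have hd0 : G.deg w = 0 := by
            unfold NHypergraph.deg
            rw [hE0, Finset.filter_empty, Finset.card_empty]
          rw [hd0, hwz]
          exact Nat.pos_of_ne_zero hjz
      · have hPi : (fun i => if i = j then insert z (P i) else P i) i = P i := by
          simp [hij]
        rw [hPi]
        intro G hG hGne
        obtain ⟨v, hv, hd⟩ := hPdeg i G (isSub_shrink_induce (hP i) hG) hGne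
        exact ⟨v, hv, by rwa [hf'i i hij v] at hd⟩
end

section
/- Let H be a connected hypergraph and f = (f_1,…,f_p) a vector function with f_1(v) + … + f_p(v) ≥ d_H(v) for all v ∈ V(H). If H admits no f-partition, then f_1(v) + f_2(v) + … + f_p(v) = d_H(v) for every vertex v of H. -/
namespace NHypergraph

/-- Auxiliary: local degree within a set `T`. -/
def dloc (H : NHypergraph) (T : Finset ℕ) (v : ℕ) : ℕ :=
  (H.E.filter (fun e => v ∈ H.inc e ∧ H.inc e ⊆ T)).card

/-- Auxiliary: every nonempty subset of `X` has a vertex of small local degree. -/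
def Good (H : NHypergraph) (h : ℕ → ℕ) (X : Finset ℕ) : Prop :=
  ∀ T ⊆ X, T.Nonempty → ∃ v ∈ T, H.dloc T v < h v

lemma good_strictlyDeg (H : NHypergraph) (h : ℕ → ℕ) (X : Finset ℕ)
    (hg : H.Good h X) : (H.induce X).StrictlyDeg h := by
  intro G hsub hne
  have hGV : G.V ⊆ X := hsub.1.trans Finset.inter_subset_left
  obtain ⟨v, hvT, hlt⟩ := hg G.V hGV hne
  refine ⟨v, hvT, lt_of_le_of_lt ?_ hlt⟩
  apply Finset.card_le_card
  intro e he
  rw [Finset.mem_filter] at he ⊢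
  have heG : e ∈ G.E := he.1
  have heH' : e ∈ (H.induce X).E := hsub.2.1 heG
  have heH : e ∈ H.E := (Finset.mem_filter.mp heH').1
  have hinc : G.inc e = H.inc e := hsub.2.2 e heG
  exact ⟨heH, hinc ▸ he.2, by rw [← hinc]; exact G.inc_sub e heG⟩

lemma partition_of_good (H : NHypergraph) {p : ℕ} (f : Fin p → ℕ → ℕ)
    (S : Finset ℕ) (hS : H.Good (fun v => ∑ i, f i v) S) :
    ∃ P : Fin p → Finset ℕ, (∀ i, P i ⊆ S) ∧
      (∀ i j, i ≠ j → Disjoint (P i) (P j)) ∧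
      (∀ w ∈ S, ∃ i, w ∈ P i) ∧
      ∀ i, H.Good (f i) (P i) := by
  induction S using Finset.strongInduction with
  | _ S ih =>
    rcases S.eq_empty_or_nonempty with rfl | hne
    · refine ⟨fun _ => ∅, fun _ => le_rfl, fun _ _ _ => Finset.disjoint_empty_left _,
        by simp, fun i T hT hTne => absurd hTne ?_⟩
      rw [Finset.subset_empty.mp hT]; simp
    · obtain ⟨v, hvS, hv⟩ := hS S le_rfl hne
      have hss : S.erase v ⊂ S := Finset.erase_ssubset hvS
      obtain ⟨P, hPsub, hPdisj, hPcov, hPgood⟩ := ih _ hss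
        (fun T hT hTne => hS T (hT.trans (Finset.erase_subset _ _)) hTne)
      have hPsubS : ∀ i, P i ⊆ S := fun i => (hPsub i).trans (Finset.erase_subset _ _)
      have hvnot : ∀ i, v ∉ P i := fun i hvi => (Finset.notMem_erase v S) (hPsub i hvi)
      set A : Fin p → Finset ℕ :=
        fun i => H.E.filter (fun e => v ∈ H.inc e ∧ H.inc e ⊆ insert v (P i)) with hA
      have hdisjA : ∀ i ∈ Finset.univ, ∀ j ∈ Finset.univ, i ≠ j → Disjoint (A i) (A j) := by
        intro i _ j _ hij
        rw [Finset.disjoint_left]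
        intro e hei hej
        rw [hA, Finset.mem_filter] at hei hej
        obtain ⟨u, hu, hune⟩ := Finset.exists_mem_ne
          (lt_of_lt_of_le one_lt_two (H.inc_card e hei.1)) v
        have hui : u ∈ P i := (Finset.mem_insert.mp (hei.2.2 hu)).resolve_left hune
        have huj : u ∈ P j := (Finset.mem_insert.mp (hej.2.2 hu)).resolve_left hune
        exact Finset.disjoint_left.mp (hPdisj i j hij) hui huj
      have hbsum : ∑ i, (A i).card < ∑ i, f i v := by
        refine lt_of_le_of_lt ?_ hv
        rw [← Finset.card_biUnion hdisjA]
        apply Finset.card_le_card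
        intro e he
        obtain ⟨i, _, hei⟩ := Finset.mem_biUnion.mp he
        rw [hA, Finset.mem_filter] at hei
        exact Finset.mem_filter.mpr ⟨hei.1, hei.2.1,
          hei.2.2.trans (Finset.insert_subset hvS (hPsubS i))⟩
      obtain ⟨i0, hi0⟩ : ∃ i, (A i).card < f i v := by
        by_contra hcon
        push_neg at hcon
        exact absurd hbsum (not_lt.mpr (Finset.sum_le_sum fun i _ => hcon i))
      refine ⟨Function.update P i0 (insert v (P i0)), ?_, ?_, ?_, ?_⟩
      · intro i
        rcases eq_or_ne i i0 with rfl | hi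
        · rw [Function.update_self]
          exact Finset.insert_subset hvS (hPsubS i)
        · rw [Function.update_of_ne hi]; exact hPsubS i
      · intro i j hij
        rcases eq_or_ne i i0 with rfl | hi
        · rw [Function.update_self, Function.update_of_ne hij.symm,
            Finset.disjoint_insert_left]
          exact ⟨hvnot j, hPdisj i j hij⟩
        · rw [Function.update_of_ne hi]
          rcases eq_or_ne j i0 with rfl | hj
          · rw [Function.update_self, Finset.disjoint_insert_right]
            exact ⟨hvnot i, hPdisj i j hij⟩
          · rw [Function.update_of_ne hj]; exact hPdisj i j hij
      · intro w hw
        rcases eq_or_ne w v with rfl | hwv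
        · exact ⟨i0, by rw [Function.update_self]; exact Finset.mem_insert_self _ _⟩
        · obtain ⟨i, hi⟩ := hPcov w (Finset.mem_erase.mpr ⟨hwv, hw⟩)
          rcases eq_or_ne i i0 with rfl | hii
          · exact ⟨i, by rw [Function.update_self]; exact Finset.mem_insert_of_mem hi⟩
          · exact ⟨i, by rw [Function.update_of_ne hii]; exact hi⟩
      · intro i
        rcases eq_or_ne i i0 with rfl | hi
        · rw [Function.update_self]
          intro T hT hTne
          by_cases hvT : v ∈ T
          · refine ⟨v, hvT, lt_of_le_of_lt ?_ hi0⟩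
            apply Finset.card_le_card
            intro e he
            rw [Finset.mem_filter] at he
            exact Finset.mem_filter.mpr ⟨he.1, he.2.1, he.2.2.trans hT⟩
          · exact hPgood i T (fun x hx =>
              (Finset.mem_insert.mp (hT hx)).resolve_left (fun h => hvT (h ▸ hx))) hTne
        · rw [Function.update_of_ne hi]; exact hPgood i

end NHypergraph

theorem nonpartitionable_degree_eq (H : NHypergraph) {p : ℕ} (f : Fin p → ℕ → ℕ)
    (hconn : H.Connected) (hdeg : ∀ v ∈ H.V, H.deg v ≤ ∑ i, f i v)
    (hnp : ¬ H.Partitionable f) :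
    ∀ v ∈ H.V, ∑ i, f i v = H.deg v := by
  intro v hv
  by_contra hne
  have hlt : H.deg v < ∑ i, f i v := (hdeg v hv).lt_of_ne (fun h => hne h.symm)
  apply hnp
  have hgood : H.Good (fun w => ∑ i, f i w) H.V := by
    intro T hT hTne
    by_cases hTV : T = H.V
    · subst hTV
      refine ⟨v, hv, lt_of_le_of_lt ?_ hlt⟩
      apply Finset.card_le_card
      intro e he
      rw [Finset.mem_filter] at he
      exact Finset.mem_filter.mpr ⟨he.1, he.2.1⟩
    · obtain ⟨e, he, ⟨u, hu⟩, ⟨w, hw⟩⟩ := hconn.2 T hT hTne hTV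
      rw [Finset.mem_inter] at hu
      rw [Finset.mem_sdiff] at hw
      refine ⟨u, hu.2, lt_of_lt_of_le ?_ (hdeg u (hT hu.2))⟩
      apply Finset.card_lt_card
      constructor
      · intro e' he'
        rw [Finset.mem_filter] at he'
        exact Finset.mem_filter.mpr ⟨he'.1, he'.2.1⟩
      · intro hcon
        have := hcon (Finset.mem_filter.mpr ⟨he, hu.1⟩)
        rw [Finset.mem_filter] at this
        exact hw.2 (this.2.2 hw.1)
  obtain ⟨P, hPsub, hPdisj, hPcov, hPgood⟩ := H.partition_of_good f H.V hgood
  exact ⟨P, ⟨hPsub, hPdisj, hPcov⟩, fun i => H.good_strictlyDeg (f i) (P i) (hPgood i)⟩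
end

section
/- Let (H,f) be a non-partitionable pair of dimension p (H connected, f_1(v)+…+f_p(v) ≥ d_H(v) for all v, and H not f-partitionable). If z is a non-separating vertex of H with f_j(z) ≠ 0 for some index j, then f_j(v) ≥ μ_H(z,v) for every vertex v ≠ z. -/
namespace NPaux

open NatHypergraph

lemma shrinkDel_V (H : NatHypergraph) (z : ℕ) : (H.shrinkDel z).V = H.V.erase z := by
  simpa [NatHypergraph.shrinkDel, NatHypergraph.shrink] using
    Finset.inter_eq_left.mpr (Finset.erase_subset z H.V)

/-- If `z` is not separating (and `H.V.erase z` is nonempty) then `H ÷ z` is connected. -/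
lemma conn_shrinkDel (H : NatHypergraph) (z : ℕ) (hz : z ∈ H.V)
    (hne : (H.V.erase z).Nonempty) (hsep : ¬ H.Separating z) :
    (H.shrinkDel z).Connected := by
  set W := H.V.erase z with hWdef
  constructor
  · rw [shrinkDel_V]; exact hne
  · intro X hX hXne hXV
    rw [shrinkDel_V] at hX hXV
    by_contra hno
    push_neg at hno
    apply hsep
    have hzX : z ∉ X := fun h => (Finset.mem_erase.mp (hX h)).1 rfl
    have hWX : (W \ X).Nonempty := by
      obtain ⟨w, hw, hwX⟩ := Finset.exists_of_ssubset (lt_of_le_of_ne hX hXV)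
      exact ⟨w, Finset.mem_sdiff.mpr ⟨hw, hwX⟩⟩
    refine ⟨X ∪ {z}, (W \ X) ∪ {z}, ?_, ?_, ?_, ?_, ?_⟩
    · ext a
      simp only [Finset.mem_union, Finset.mem_singleton, Finset.mem_sdiff]
      constructor
      · rintro ((h | rfl) | (⟨h, _⟩ | rfl))
        · exact (Finset.mem_erase.mp (hX h)).2
        · exact hz
        · exact (Finset.mem_erase.mp h).2
        · exact hz
      · intro ha
        by_cases haz : a = z
        · exact Or.inl (Or.inr haz)
        · by_cases haX : a ∈ X
          · exact Or.inl (Or.inl haX)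
          · exact Or.inr (Or.inl ⟨Finset.mem_erase.mpr ⟨haz, ha⟩, haX⟩)
    · ext a
      simp only [Finset.mem_inter, Finset.mem_union, Finset.mem_singleton, Finset.mem_sdiff]
      constructor
      · rintro ⟨h1, h2⟩
        rcases h1 with h1 | h1
        · rcases h2 with ⟨_, h2⟩ | h2
          · exact absurd h1 h2
          · exact h2
        · exact h1
      · rintro rfl; exact ⟨Or.inr rfl, Or.inr rfl⟩
    · obtain ⟨x, hx⟩ := hXne
      have : ({x, z} : Finset ℕ) ⊆ X ∪ {z} := by
        intro a ha
        rcases Finset.mem_insert.mp ha with rfl | ha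
        · exact Finset.mem_union_left _ hx
        · exact Finset.mem_union_right _ ha
      calc 2 = ({x, z} : Finset ℕ).card := (Finset.card_pair (fun h => hzX (by rwa [h] at hx))).symm
        _ ≤ _ := Finset.card_le_card this
    · obtain ⟨x, hx⟩ := hWX
      have hxz : x ≠ z := fun h =>
        (Finset.mem_erase.mp (Finset.mem_sdiff.mp hx).1).1 h
      have : ({x, z} : Finset ℕ) ⊆ (W \ X) ∪ {z} := by
        intro a ha
        rcases Finset.mem_insert.mp ha with rfl | ha
        · exact Finset.mem_union_left _ hx
        · exact Finset.mem_union_right _ ha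
      calc 2 = ({x, z} : Finset ℕ).card := (Finset.card_pair hxz).symm
        _ ≤ _ := Finset.card_le_card this
    · intro e he
      by_cases hcard : 2 ≤ (H.inc e ∩ W).card
      · have heE : e ∈ (H.shrinkDel z).E := by
          simp only [NatHypergraph.shrinkDel, NatHypergraph.shrink, Finset.mem_filter]
          exact ⟨he, hcard⟩
        have hinc : (H.shrinkDel z).inc e = H.inc e ∩ W := rfl
        by_cases hmeet : ((H.inc e ∩ W) ∩ X).Nonempty
        · have hsub : H.inc e ∩ W ⊆ X := by
            have hcross := hno e heE (by rw [hinc]; exact hmeet)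
            intro a ha
            by_contra haX
            exact Finset.nonempty_iff_ne_empty.mp ⟨a, by rw [hinc]; exact Finset.mem_sdiff.mpr ⟨ha, haX⟩⟩ hcross
          left
          intro a ha
          by_cases haz : a = z
          · exact Finset.mem_union_right _ (Finset.mem_singleton.mpr haz)
          · have : a ∈ H.inc e ∩ W := Finset.mem_inter.mpr
              ⟨ha, Finset.mem_erase.mpr ⟨haz, H.inc_sub e he ha⟩⟩
            exact Finset.mem_union_left _ (hsub this)
        · right
          intro a ha
          by_cases haz : a = z
          · exact Finset.mem_union_right _ (Finset.mem_singleton.mpr haz)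
          · have haW : a ∈ H.inc e ∩ W := Finset.mem_inter.mpr
              ⟨ha, Finset.mem_erase.mpr ⟨haz, H.inc_sub e he ha⟩⟩
            have haX : a ∉ X := fun hc => hmeet ⟨a, Finset.mem_inter.mpr ⟨haW, hc⟩⟩
            exact Finset.mem_union_left _
              (Finset.mem_sdiff.mpr ⟨(Finset.mem_inter.mp haW).2, haX⟩)
      · -- at most one vertex of `inc e` avoids `z`
        push_neg at hcard
        have hsing : ∃ x, H.inc e ∩ W ⊆ {x} :=
          Finset.card_le_one_iff_subset_singleton.mp (Nat.lt_succ_iff.mp hcard)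
        obtain ⟨x, hx⟩ := hsing
        have key : ∀ a ∈ H.inc e, a = z ∨ (a = x ∧ a ∈ W) := by
          intro a ha
          by_cases haz : a = z
          · exact Or.inl haz
          · have haW : a ∈ H.inc e ∩ W := Finset.mem_inter.mpr
              ⟨ha, Finset.mem_erase.mpr ⟨haz, H.inc_sub e he ha⟩⟩
            exact Or.inr ⟨Finset.mem_singleton.mp (hx haW), (Finset.mem_inter.mp haW).2⟩
        by_cases hxX : x ∈ X
        · left
          intro a ha
          rcases key a ha with rfl | ⟨rfl, _⟩
          · exact Finset.mem_union_right _ (Finset.mem_singleton.mpr rfl)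
          · exact Finset.mem_union_left _ hxX
        · right
          intro a ha
          rcases key a ha with rfl | ⟨rfl, haW⟩
          · exact Finset.mem_union_right _ (Finset.mem_singleton.mpr rfl)
          · exact Finset.mem_union_left _ (Finset.mem_sdiff.mpr ⟨haW, hxX⟩)

end NPaux

namespace NPaux

open NatHypergraph

/-- Backward edge property of an ordering list. -/
def BackProp (H : NatHypergraph) (L : List ℕ) : Prop :=
  ∀ q u r, L = q ++ u :: r → r ≠ [] → ∃ e ∈ H.E, u ∈ H.inc e ∧ ∃ w ∈ H.inc e, w ∈ r

lemma order_aux (H : NatHypergraph) (hc : H.Connected) (v : ℕ) :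
    ∀ n (R : List ℕ), (H.V \ R.toFinset).card = n → R ≠ [] → R.Nodup →
      R.toFinset ⊆ H.V → (∀ q u, R = q ++ [u] → u = v) → BackProp H R →
      ∃ L : List ℕ, L ≠ [] ∧ L.Nodup ∧ L.toFinset = H.V ∧
        (∀ q u, L = q ++ [u] → u = v) ∧ BackProp H L := by
  intro n
  induction n with
  | zero =>
    intro R hcard hne hnd hsub hlast hback
    refine ⟨R, hne, hnd, ?_, hlast, hback⟩
    have : H.V \ R.toFinset = ∅ := Finset.card_eq_zero.mp hcard
    exact Finset.Subset.antisymm (fun x hx => by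
      by_contra hxR
      exact absurd (Finset.mem_sdiff.mpr ⟨hx, hxR⟩) (this ▸ Finset.notMem_empty x)) hsub
      |>.symm ▸ rfl
  | succ n ih =>
    intro R hcard hne hnd hsub hlast hback
    have hXne : R.toFinset.Nonempty := by
      obtain ⟨a, t, rfl⟩ := List.exists_cons_of_ne_nil hne
      exact ⟨a, by simp⟩
    have hXV : R.toFinset ≠ H.V := by
      intro h
      rw [h] at hcard
      simp at hcard
    obtain ⟨e, he, hmeet, hout⟩ := hc.2 R.toFinset hsub hXne hXV
    obtain ⟨w, hw⟩ := hout
    have hwe : w ∈ H.inc e := (Finset.mem_sdiff.mp hw).1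
    have hwR : w ∉ R.toFinset := (Finset.mem_sdiff.mp hw).2
    have hwV : w ∈ H.V := H.inc_sub e he hwe
    apply ih (w :: R)
    · rw [List.toFinset_cons]
      rw [Finset.sdiff_insert]
      rw [Finset.card_erase_of_mem (Finset.mem_sdiff.mpr ⟨hwV, hwR⟩), hcard]
      omega
    · simp
    · exact List.nodup_cons.mpr ⟨fun h => hwR (List.mem_toFinset.mpr h), hnd⟩
    · rw [List.toFinset_cons]
      exact Finset.insert_subset hwV hsub
    · intro q u h
      cases q with
      | nil =>
        simp only [List.nil_append] at h
        injection h with h1 h2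
        exact absurd h2 hne
      | cons a q' =>
        simp only [List.cons_append, List.cons.injEq] at h
        exact hlast q' u h.2
    · intro q u r h hr
      cases q with
      | nil =>
        simp only [List.nil_append, List.cons.injEq] at h
        obtain ⟨rfl, rfl⟩ := h
        obtain ⟨y, hy⟩ := hmeet
        refine ⟨e, he, hwe, y, (Finset.mem_inter.mp hy).1, ?_⟩
        exact List.mem_toFinset.mp (Finset.mem_inter.mp hy).2
      | cons a q' =>
        simp only [List.cons_append, List.cons.injEq] at h
        exact hback q' u r h.2 hr

lemma exists_order (H : NatHypergraph) (hc : H.Connected) (v : ℕ) (hv : v ∈ H.V) :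
    ∃ L : List ℕ, L ≠ [] ∧ L.Nodup ∧ L.toFinset = H.V ∧
      (∀ q u, L = q ++ [u] → u = v) ∧ BackProp H L := by
  apply order_aux H hc v (H.V \ [v].toFinset).card [v] rfl (by simp) (by simp)
  · simpa using hv
  · intro q u h
    cases q with
    | nil => simpa using h.symm
    | cons a q' =>
      exfalso
      simp only [List.cons_append, List.cons.injEq] at h
      exact absurd h.2.symm (List.append_ne_nil_of_right_ne_nil q' (by simp))
  · intro q u r h hr
    exfalso
    cases q with
    | nil => simp only [List.nil_append, List.cons.injEq] at h; exact hr h.2.symm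
    | cons a q' =>
      simp only [List.cons_append, List.cons.injEq] at h
      exact absurd h.2.symm (List.append_ne_nil_of_right_ne_nil q' (by simp))

end NPaux

namespace NPaux

open NatHypergraph

/-- Number of edges at `u` lying inside `insert u S`. -/
def cnt (H : NatHypergraph) (u : ℕ) (S : Finset ℕ) : ℕ :=
  (H.E.filter (fun e => u ∈ H.inc e ∧ H.inc e ⊆ insert u S)).card

/-- Invariant of the greedy coloring along the prefix `pre`. -/
def Inv (H : NatHypergraph) {p : ℕ} (f : Fin p → ℕ → ℕ) (j : Fin p) (z : ℕ)
    (pre : List ℕ) (P : Fin p → Finset ℕ) : Prop :=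
  (∀ i, P i ⊆ pre.toFinset) ∧
  (∀ x ∈ pre.toFinset, ∃ i, x ∈ P i) ∧
  (∀ i i', i ≠ i' → Disjoint (P i) (P i')) ∧
  (pre ≠ [] → z ∈ P j) ∧
  (∀ i, ∀ u ∈ P i, ∀ q r, pre = q ++ u :: r → cnt H u (P i ∩ q.toFinset) < f i u)

lemma exists_last_mem (l : List ℕ) (S : Finset ℕ) (hS : S.Nonempty)
    (hsub : ∀ x ∈ S, x ∈ l) :
    ∃ q u r, l = q ++ u :: r ∧ u ∈ S ∧ ∀ x ∈ r, x ∉ S := by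
  induction l generalizing S with
  | nil =>
    obtain ⟨x, hx⟩ := hS
    exact absurd (hsub x hx) List.not_mem_nil
  | cons a t ih =>
    by_cases h : ∃ x ∈ S, x ∈ t
    · obtain ⟨x0, hx0S, hx0t⟩ := h
      obtain ⟨q, u, r, hqr, huS, hr⟩ := ih (S.filter (· ∈ t))
        ⟨x0, Finset.mem_filter.mpr ⟨hx0S, hx0t⟩⟩
        (fun x hx => (Finset.mem_filter.mp hx).2)
      refine ⟨a :: q, u, r, by rw [hqr]; rfl, (Finset.mem_filter.mp huS).1, ?_⟩
      intro x hx hxS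
      have hxt : x ∈ t := by
        rw [hqr]; exact List.mem_append_right _ (List.mem_cons_of_mem _ hx)
      exact hr x hx (Finset.mem_filter.mpr ⟨hxS, hxt⟩)
    · push_neg at h
      obtain ⟨x, hx⟩ := hS
      have hxa : x = a := by
        rcases List.mem_cons.mp (hsub x hx) with h' | h'
        · exact h'
        · exact absurd h' (h x hx)
      exact ⟨[], a, t, rfl, hxa ▸ hx, fun y hy hyS => h y hyS hy⟩

lemma extend (H : NatHypergraph) {p : ℕ} (f : Fin p → ℕ → ℕ) (j : Fin p) (z v : ℕ)
    (hjz : f j z ≠ 0) (hmult : f j v < H.mult z v)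
    (hdeg : ∀ u ∈ H.V, H.deg u ≤ ∑ i, f i u)
    (M : List ℕ) (hMnd : M.Nodup) (hMfin : M.toFinset = H.V)
    (hzhead : ∀ u r, M = u :: r → u = z)
    (hlast : ∀ q u, M = q ++ [u] → u = v)
    (hback : ∀ q u r, M = q ++ u :: r → q ≠ [] → r ≠ [] →
      ∃ e ∈ H.E, u ∈ H.inc e ∧ ∃ w ∈ H.inc e, w ∈ r) :
    ∀ suf pre P, M = pre ++ suf → Inv H f j z pre P →
      ∃ P', Inv H f j z M P' := by
  intro suf
  induction suf with
  | nil =>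
    intro pre P hsplit hP
    have hpm : pre = M := by simpa using hsplit.symm
    exact ⟨P, hpm ▸ hP⟩
  | cons u rest ih =>
    intro pre P hsplit hP
    obtain ⟨hP1, hP2, hP3, hP4, hP5⟩ := hP
    have hnd' : (pre ++ u :: rest).Nodup := hsplit ▸ hMnd
    obtain ⟨hndpre, hndc, hdisj⟩ := List.nodup_append.mp hnd'
    have hupre : u ∉ pre.toFinset :=
      fun h => hdisj u (List.mem_toFinset.mp h) u List.mem_cons_self rfl
    have hurest : u ∉ rest := (List.nodup_cons.mp hndc).1
    have huM : u ∈ H.V := by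
      rw [← hMfin, hsplit]
      simp
    -- the pairwise-disjoint families of counted edges
    have hAdisj : ∀ i i', i ≠ i' →
        Disjoint (H.E.filter (fun e => u ∈ H.inc e ∧ H.inc e ⊆ insert u (P i)))
          (H.E.filter (fun e => u ∈ H.inc e ∧ H.inc e ⊆ insert u (P i'))) := by
      intro i i' hii
      rw [Finset.disjoint_left]
      intro e he he'
      obtain ⟨heE, _, hs⟩ := Finset.mem_filter.mp he
      obtain ⟨_, _, hs'⟩ := Finset.mem_filter.mp he'
      have hone : H.inc e ⊆ {u} := by
        intro x hx
        rcases Finset.mem_insert.mp (hs hx) with rfl | hxP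
        · exact Finset.mem_singleton_self x
        · rcases Finset.mem_insert.mp (hs' hx) with rfl | hxP'
          · exact Finset.mem_singleton_self x
          · exact absurd hxP' (Finset.disjoint_left.mp (hP3 i i' hii) hxP)
      have hc1 := Finset.card_le_card hone
      have hc2 := H.inc_card e heE
      rw [Finset.card_singleton] at hc1
      omega
    have hAcnt : ∀ i, cnt H u (P i) =
        (H.E.filter (fun e => u ∈ H.inc e ∧ H.inc e ⊆ insert u (P i))).card := fun _ => rfl
    have hbi : (Finset.univ.biUnion (fun i =>
          H.E.filter (fun e => u ∈ H.inc e ∧ H.inc e ⊆ insert u (P i)))).card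
        = ∑ i, (H.E.filter (fun e => u ∈ H.inc e ∧ H.inc e ⊆ insert u (P i))).card :=
      Finset.card_biUnion (fun i _ i' _ h => hAdisj i i' h)
    have hbiD : Finset.univ.biUnion (fun i =>
          H.E.filter (fun e => u ∈ H.inc e ∧ H.inc e ⊆ insert u (P i)))
        ⊆ H.E.filter (fun e => u ∈ H.inc e) := by
      intro x hx
      obtain ⟨i, _, hxi⟩ := Finset.mem_biUnion.mp hx
      obtain ⟨h1, h2, _⟩ := Finset.mem_filter.mp hxi
      exact Finset.mem_filter.mpr ⟨h1, h2⟩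
    have hdegu : H.deg u = (H.E.filter (fun e => u ∈ H.inc e)).card := rfl
    -- choose a color for `u`
    have hex : ∃ i₀, cnt H u (P i₀) < f i₀ u ∧ (pre = [] → i₀ = j) := by
      by_cases hpre : pre = []
      · -- u = z, first vertex
        have huz : u = z := hzhead u rest (by rw [hsplit, hpre]; rfl)
        refine ⟨j, ?_, fun _ => rfl⟩
        have hPj : P j = ∅ := Finset.subset_empty.mp (by simpa [hpre] using hP1 j)
        have hempty : H.E.filter (fun e => u ∈ H.inc e ∧ H.inc e ⊆ insert u (P j)) = ∅ := by
          rw [Finset.eq_empty_iff_forall_notMem]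
          intro e he
          obtain ⟨heE, _, hs⟩ := Finset.mem_filter.mp he
          rw [hPj] at hs
          have h1 := Finset.card_le_card hs
          have h2 := H.inc_card e heE
          simp at h1
          omega
        rw [hAcnt, hempty]
        simp only [Finset.card_empty]
        rw [huz]
        exact Nat.pos_of_ne_zero hjz
      · by_cases hrest : rest = []
        · -- u = v, last vertex
          have huv : u = v := hlast pre u (by rw [hsplit, hrest])
          by_contra hall
          push_neg at hall
          have hall' : ∀ i, f i u ≤ cnt H u (P i) := by
            intro i
            rcases Nat.lt_or_ge (cnt H u (P i)) (f i u) with hlt | hge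
            · exact absurd (hall i hlt).1 hpre
            · exact hge
          have hzP : z ∈ P j := hP4 hpre
          rw [← huv] at hmult
          have hBsub : H.E.filter (fun e => H.inc e = {z, u}) ⊆
              H.E.filter (fun e => u ∈ H.inc e ∧ H.inc e ⊆ insert u (P j)) := by
            intro e he
            obtain ⟨heE, hinc⟩ := Finset.mem_filter.mp he
            refine Finset.mem_filter.mpr ⟨heE, ?_, ?_⟩
            · rw [hinc]
              exact Finset.mem_insert_of_mem (Finset.mem_singleton_self u)
            · rw [hinc]
              intro x hx
              rcases Finset.mem_insert.mp hx with rfl | hx'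
              · exact Finset.mem_insert_of_mem hzP
              · rw [Finset.mem_singleton.mp hx']
                exact Finset.mem_insert_self u _
          have hmult' : H.mult z u ≤
              (H.E.filter (fun e => u ∈ H.inc e ∧ H.inc e ⊆ insert u (P j))).card :=
            Finset.card_le_card hBsub
          have hle1 : ∑ i, (H.E.filter (fun e => u ∈ H.inc e ∧ H.inc e ⊆ insert u (P i))).card
              ≤ H.deg u := by
            rw [← hbi, hdegu]
            exact Finset.card_le_card hbiD
          have hle2 : H.deg u ≤ ∑ i, f i u := hdeg u huM
          have hle3 : ∑ i, f i u ≤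
              ∑ i, (H.E.filter (fun e => u ∈ H.inc e ∧ H.inc e ⊆ insert u (P i))).card :=
            Finset.sum_le_sum (fun i _ => (hAcnt i) ▸ hall' i)
          have heq : ∑ i, (H.E.filter (fun e => u ∈ H.inc e ∧ H.inc e ⊆ insert u (P i))).card
              = ∑ i, f i u := le_antisymm (le_trans hle1 hle2) hle3
          have hpoint : ∀ i ∈ Finset.univ, 
              (H.E.filter (fun e => u ∈ H.inc e ∧ H.inc e ⊆ insert u (P i))).card = f i u :=
            fun i hi => ((Finset.sum_eq_sum_iff_of_le
              (fun i _ => (hAcnt i) ▸ hall' i)).mp heq.symm i hi).symm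
          have := hpoint j (Finset.mem_univ j)
          have hmm : H.mult z u ≤ f j u := this ▸ hmult'
          omega
        · -- middle vertex: it has an edge to a later vertex
          obtain ⟨e0, he0, hue0, w, hwe0, hwrest⟩ := hback pre u rest hsplit hpre hrest
          by_contra hall
          push_neg at hall
          have hall' : ∀ i, f i u ≤ cnt H u (P i) := by
            intro i
            rcases Nat.lt_or_ge (cnt H u (P i)) (f i u) with hlt | hge
            · exact absurd (hall i hlt).1 hpre
            · exact hge
          have he0A : ∀ i, e0 ∉ H.E.filter (fun e => u ∈ H.inc e ∧ H.inc e ⊆ insert u (P i)) := by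
            intro i hmem
            obtain ⟨_, _, hs⟩ := Finset.mem_filter.mp hmem
            rcases Finset.mem_insert.mp (hs hwe0) with rfl | hwP
            · exact hurest hwrest
            · have hwpre : w ∉ pre.toFinset :=
                fun hc => hdisj w (List.mem_toFinset.mp hc) w (List.mem_cons_of_mem u hwrest) rfl
              exact hwpre (hP1 i hwP)
          have hsuberase : Finset.univ.biUnion (fun i =>
                H.E.filter (fun e => u ∈ H.inc e ∧ H.inc e ⊆ insert u (P i)))
              ⊆ (H.E.filter (fun e => u ∈ H.inc e)).erase e0 := by
            intro x hx
            refine Finset.mem_erase.mpr ⟨?_, hbiD hx⟩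
            intro hxe
            obtain ⟨i, _, hxi⟩ := Finset.mem_biUnion.mp hx
            exact he0A i (hxe ▸ hxi)
          have he0D : e0 ∈ H.E.filter (fun e => u ∈ H.inc e) :=
            Finset.mem_filter.mpr ⟨he0, hue0⟩
          have hdpos : 1 ≤ H.deg u := by
            rw [hdegu]
            exact Finset.card_pos.mpr ⟨e0, he0D⟩
          have hle1 : ∑ i, (H.E.filter (fun e => u ∈ H.inc e ∧ H.inc e ⊆ insert u (P i))).card
              ≤ H.deg u - 1 := by
            rw [← hbi]
            calc _ ≤ ((H.E.filter (fun e => u ∈ H.inc e)).erase e0).card :=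
                  Finset.card_le_card hsuberase
              _ = H.deg u - 1 := by rw [Finset.card_erase_of_mem he0D, hdegu]
          have hle2 : H.deg u ≤ ∑ i, f i u := hdeg u huM
          have hle3 : ∑ i, f i u ≤
              ∑ i, (H.E.filter (fun e => u ∈ H.inc e ∧ H.inc e ⊆ insert u (P i))).card :=
            Finset.sum_le_sum (fun i _ => (hAcnt i) ▸ hall' i)
          omega
    obtain ⟨i₀, hi₀, hij⟩ := hex
    -- insert `u` into class `i₀`
    refine ih (pre ++ [u]) (Function.update P i₀ (insert u (P i₀)))
      (by rw [hsplit, List.append_assoc]; rfl) ?_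
    have hsubP : ∀ i, P i ⊆ Function.update P i₀ (insert u (P i₀)) i := by
      intro i
      by_cases hi : i = i₀
      · subst hi
        rw [Function.update_self]
        exact Finset.subset_insert u (P i)
      · rw [Function.update_of_ne hi]
    have hmono : pre.toFinset ⊆ (pre ++ [u]).toFinset := by
      intro x hx
      rw [List.toFinset_append]
      exact Finset.mem_union_left _ hx
    have humem : u ∈ (pre ++ [u]).toFinset := by simp
    refine ⟨?_, ?_, ?_, ?_, ?_⟩
    · intro i x hx
      by_cases hi : i = i₀
      · subst hi
        rw [Function.update_self] at hx
        rcases Finset.mem_insert.mp hx with rfl | hx'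
        · exact humem
        · exact hmono (hP1 _ hx')
      · rw [Function.update_of_ne hi] at hx
        exact hmono (hP1 i hx)
    · intro x hx
      rw [List.toFinset_append] at hx
      rcases Finset.mem_union.mp hx with hx' | hx'
      · obtain ⟨i, hi⟩ := hP2 x hx'
        exact ⟨i, hsubP i hi⟩
      · refine ⟨i₀, ?_⟩
        rw [Function.update_self]
        simp at hx'
        rw [hx']
        exact Finset.mem_insert_self u _
    · intro i i' hii
      have huPn : ∀ k, u ∉ P k := fun k hc => hupre (hP1 k hc)
      by_cases hi : i = i₀
      · subst hi
        rw [Function.update_self, Function.update_of_ne (Ne.symm hii)]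
        exact Finset.disjoint_insert_left.mpr ⟨huPn i', hP3 i i' hii⟩
      · rw [Function.update_of_ne hi]
        by_cases hi' : i' = i₀
        · subst hi'
          rw [Function.update_self]
          exact Finset.disjoint_insert_right.mpr ⟨huPn i, hP3 i i' hii⟩
        · rw [Function.update_of_ne hi']
          exact hP3 i i' hii
    · intro _
      by_cases hpre : pre = []
      · have huz : u = z := hzhead u rest (by rw [hsplit, hpre]; rfl)
        rw [hij hpre, Function.update_self, ← huz]
        exact Finset.mem_insert_self u _
      · exact hsubP j (hP4 hpre)
    · intro i u' hu' q r hqr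
      by_cases hru : r = []
      · subst hru
        obtain ⟨hpq, huu⟩ := List.append_inj' hqr rfl
        have huu' : u = u' := by injection huu
        subst huu'
        have hii₀ : i = i₀ := by
          by_contra hii
          rw [Function.update_of_ne hii] at hu'
          exact hupre (hP1 i hu')
        subst hii₀
        rw [Function.update_self, ← hpq,
          Finset.insert_inter_of_notMem hupre,
          Finset.inter_eq_left.mpr (hP1 _)]
        rw [Function.update_self] at hu'
        exact hi₀
      · rcases List.eq_nil_or_concat r with hr0 | ⟨r₀, x, hr⟩
        · exact absurd hr0 hru
        · rw [List.concat_eq_append] at hr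
          subst hr
          have hqr' : pre ++ [u] = (q ++ u' :: r₀) ++ [x] := by
            rw [hqr]; simp
          obtain ⟨hpq, hux⟩ := List.append_inj' hqr' rfl
          have hux' : u = x := by injection hux
          have hu'pre : u' ∈ pre.toFinset := by
            rw [hpq]
            simp
          have hu'u : u' ≠ u := fun hc => hupre (hc ▸ hu'pre)
          have hu'P : u' ∈ P i := by
            by_cases hi : i = i₀
            · subst hi
              rw [Function.update_self] at hu'
              rcases Finset.mem_insert.mp hu' with hc | h'
              · exact absurd hc hu'u
              · exact h'
            · rwa [Function.update_of_ne hi] at hu'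
          have hold := hP5 i u' hu'P q r₀ hpq
          have hqpre : q.toFinset ⊆ pre.toFinset := by
            intro y hy
            rw [hpq, List.toFinset_append]
            exact Finset.mem_union_left _ hy
          have hint : Function.update P i₀ (insert u (P i₀)) i ∩ q.toFinset
              = P i ∩ q.toFinset := by
            by_cases hi : i = i₀
            · subst hi
              rw [Function.update_self]
              exact Finset.insert_inter_of_notMem (fun hc => hupre (hqpre hc))
            · rw [Function.update_of_ne hi]
          rw [hint]
          exact hold

end NPaux

theorem nonpartitionable_mult_le (H : NatHypergraph) {p : ℕ} (f : Fin p → ℕ → ℕ)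
    (hconn : H.Connected) (hdeg : ∀ v ∈ H.V, H.deg v ≤ ∑ i, f i v)
    (hnp : ¬ H.Partitionable f)
    (z : ℕ) (hz : z ∈ H.V) (hzsep : ¬ H.Separating z)
    (j : Fin p) (hj : f j z ≠ 0) :
    ∀ v ∈ H.V, v ≠ z → H.mult z v ≤ f j v := by
  intro v hv hvz
  by_contra hcon
  push_neg at hcon
  apply hnp
  have hvW : v ∈ H.V.erase z := Finset.mem_erase.mpr ⟨hvz, hv⟩
  have hWne : (H.V.erase z).Nonempty := ⟨v, hvW⟩
  have hc' := NPaux.conn_shrinkDel H z hz hWne hzsep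
  have hvW' : v ∈ (H.shrinkDel z).V := by rw [NPaux.shrinkDel_V]; exact hvW
  obtain ⟨L, hLne, hLnd, hLfin, hLlast, hLback⟩ :=
    NPaux.exists_order (H.shrinkDel z) hc' v hvW'
  have hLfin' : L.toFinset = H.V.erase z := by rw [hLfin, NPaux.shrinkDel_V]
  have hLback' : ∀ q u r, L = q ++ u :: r → r ≠ [] →
      ∃ e ∈ H.E, u ∈ H.inc e ∧ ∃ w ∈ H.inc e, w ∈ r := by
    intro q u r hqr hr
    obtain ⟨e, he, hu, w, hw, hwr⟩ := hLback q u r hqr hr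
    have heE : e ∈ H.E := (Finset.mem_filter.mp he).1
    have hinc : (H.shrinkDel z).inc e = H.inc e ∩ H.V.erase z := rfl
    rw [hinc] at hu hw
    exact ⟨e, heE, (Finset.mem_inter.mp hu).1, w, (Finset.mem_inter.mp hw).1, hwr⟩
  have hzL : z ∉ L := fun h =>
    (Finset.mem_erase.mp (hLfin' ▸ List.mem_toFinset.mpr h)).1 rfl
  have hMnd : (z :: L).Nodup := List.nodup_cons.mpr ⟨hzL, hLnd⟩
  have hMfin : (z :: L).toFinset = H.V := by
    rw [List.toFinset_cons, hLfin', Finset.insert_erase hz]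
  have hzhead : ∀ u r, (z :: L) = u :: r → u = z := by
    intro u r h
    injection h with h1 _
    exact h1.symm
  have hlast : ∀ q u, (z :: L) = q ++ [u] → u = v := by
    intro q u h
    cases q with
    | nil =>
      injection h with h1 h2
      exact absurd h2 hLne
    | cons a q' =>
      injection h with h1 h2
      exact hLlast q' u h2
  have hback : ∀ q u r, (z :: L) = q ++ u :: r → q ≠ [] → r ≠ [] →
      ∃ e ∈ H.E, u ∈ H.inc e ∧ ∃ w ∈ H.inc e, w ∈ r := by
    intro q u r h hq hr
    cases q with
    | nil => exact absurd rfl hq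
    | cons a q' =>
      injection h with h1 h2
      exact hLback' q' u r h2 hr
  have hInv0 : NPaux.Inv H f j z [] (fun _ => (∅ : Finset ℕ)) :=
    ⟨fun i => by simp, fun x hx => by simp at hx,
      fun i i' _ => Finset.disjoint_empty_left _,
      fun h => absurd rfl h, fun i u hu => absurd hu (Finset.notMem_empty u)⟩
  obtain ⟨P, hP1, hP2, hP3, hP4, hP5⟩ :=
    NPaux.extend H f j z v hj hcon hdeg (z :: L) hMnd hMfin hzhead hlast hback
      (z :: L) [] _ rfl hInv0
  refine ⟨P, ⟨⟨fun i => hMfin ▸ hP1 i, hP3,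
    fun x hx => hP2 x (by rw [hMfin]; exact hx)⟩, ?_⟩⟩
  intro i G hGsub hGne
  obtain ⟨hGV, hGE, hGinc⟩ := hGsub
  have hGVP : ∀ x ∈ G.V, x ∈ P i := by
    intro x hx
    exact (Finset.mem_inter.mp (hGV hx)).1
  have hGVM : ∀ x ∈ G.V, x ∈ (z :: L) := fun x hx =>
    List.mem_toFinset.mp (hP1 i (hGVP x hx))
  obtain ⟨q, u, r, hqr, huG, hrG⟩ := NPaux.exists_last_mem (z :: L) G.V hGne hGVM
  have huP : u ∈ P i := hGVP u huG
  have hcnt := hP5 i u huP q r hqr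
  refine ⟨u, huG, lt_of_le_of_lt ?_ hcnt⟩
  show G.deg u ≤ NPaux.cnt H u (P i ∩ q.toFinset)
  unfold NatHypergraph.deg NPaux.cnt
  apply Finset.card_le_card
  intro e he
  obtain ⟨heG, hueG⟩ := Finset.mem_filter.mp he
  have heI : e ∈ (H.induce (P i)).E := hGE heG
  obtain ⟨heH, hincP⟩ := Finset.mem_filter.mp heI
  have hince : G.inc e = H.inc e := by rw [hGinc e heG]; rfl
  refine Finset.mem_filter.mpr ⟨heH, by rwa [hince] at hueG, ?_⟩
  intro x hx
  have hxG : x ∈ G.V := G.inc_sub e heG (by rwa [← hince] at hx)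
  by_cases hxu : x = u
  · rw [hxu]; exact Finset.mem_insert_self u _
  · refine Finset.mem_insert_of_mem (Finset.mem_inter.mpr ⟨hGVP x hxG, ?_⟩)
    have hxM : x ∈ z :: L := hGVM x hxG
    rw [hqr] at hxM
    rcases List.mem_append.mp hxM with h' | h'
    · exact List.mem_toFinset.mpr h'
    · rcases List.mem_cons.mp h' with h'' | h''
      · exact absurd h'' hxu
      · exact absurd hxG (hrG x h'')
end

section
/- Let (H,f) be a non-partitionable pair of dimension p with |H| ≥ 2 and let u be any vertex of H. Then H − u admits an f-partition, and every f-partition (H_1,…,H_p) of H − u satisfies f_i(u) = d_{H_i + u}(u) for all i ∈ {1,…,p}, and moreover E_H(u) is the disjoint union of the sets E_{H_i + u}(u) over i = 1,…,p. -/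
namespace NHypergraph

section Aux

open Finset

/-- Back-degree: number of edges of `H` containing `v` with incidence set inside `S`. -/
def back (H : NHypergraph) (v : ℕ) (S : Finset ℕ) : ℕ :=
  (H.E.filter (fun e => v ∈ H.inc e ∧ H.inc e ⊆ S)).card

/-- Hereditary degeneracy property on a vertex set. -/
def Dset (H : NHypergraph) (f : ℕ → ℕ) (S : Finset ℕ) : Prop :=
  ∀ Y ⊆ S, Y.Nonempty → ∃ v ∈ Y, back H v Y < f v

lemma back_mono (H : NHypergraph) (v : ℕ) {S T : Finset ℕ} (h : S ⊆ T) :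
    back H v S ≤ back H v T := by
  apply Finset.card_le_card
  apply Finset.monotone_filter_right
  intro e _ hp
  exact ⟨hp.1, hp.2.trans h⟩

lemma Dset_strictlyDeg (H : NHypergraph) (f : ℕ → ℕ) {S : Finset ℕ}
    (hD : Dset H f S) (K : NHypergraph) (hE : K.E ⊆ H.E)
    (hinc : ∀ e ∈ K.E, K.inc e = H.inc e) (hV : K.V ⊆ S) :
    K.StrictlyDeg f := by
  intro G hG hne
  obtain ⟨hGV, hGE, hGinc⟩ := hG
  obtain ⟨v, hvY, hvb⟩ := hD G.V (hGV.trans hV) hne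
  refine ⟨v, hvY, lt_of_le_of_lt ?_ hvb⟩
  unfold NHypergraph.deg back
  apply Finset.card_le_card
  intro e he
  rw [Finset.mem_filter] at he ⊢
  have heG := he.1
  have h1 : G.inc e = H.inc e := (hGinc e heG).trans (hinc e (hGE heG))
  refine ⟨hE (hGE heG), ?_, ?_⟩
  · rw [← h1]; exact he.2
  · rw [← h1]; exact G.inc_sub e heG

lemma strictlyDeg_mono (K K' : NHypergraph) (f : ℕ → ℕ)
    (h : K.StrictlyDeg f) (hV : K'.V ⊆ K.V) (hE : K'.E ⊆ K.E)
    (hinc : ∀ e ∈ K'.E, K'.inc e = K.inc e) : K'.StrictlyDeg f := by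
  intro G hG hne
  exact h G ⟨hG.1.trans hV, hG.2.1.trans hE,
    fun e he => (hG.2.2 e he).trans (hinc e (hG.2.1 he))⟩ hne

/-- Second vertex of an edge. -/
lemma exists_second (H : NHypergraph) {e : ℕ} (he : e ∈ H.E) (u : ℕ) :
    ∃ w ∈ H.inc e, w ≠ u := by
  by_contra h
  push_neg at h
  have hsub : H.inc e ⊆ {u} := fun w hw => Finset.mem_singleton.mpr (h w hw)
  have := (H.inc_card e he).trans (Finset.card_le_card hsub)
  simp at this

/-- Greedy construction of a good partition of any `X ⊆ V(H) \ {u}`. -/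
lemma exists_good_partition (H : NHypergraph) {p : ℕ} (f : Fin p → ℕ → ℕ)
    (hdeg : ∀ v ∈ H.V, H.deg v ≤ ∑ i, f i v) (hconn : H.Connected)
    (u : ℕ) (hu : u ∈ H.V) :
    ∀ X : Finset ℕ, X ⊆ H.V.erase u →
      ∃ P : Fin p → Finset ℕ, (∀ i, P i ⊆ X) ∧
        (∀ i j, i ≠ j → Disjoint (P i) (P j)) ∧
        (∀ v ∈ X, ∃ i, v ∈ P i) ∧
        (∀ i, Dset H (f i) (P i)) := by
  intro X
  induction X using Finset.strongInduction with
  | _ X ih =>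
    intro hX
    rcases X.eq_empty_or_nonempty with rfl | hne
    · refine ⟨fun _ => ∅, fun i => Finset.Subset.refl _,
        fun i j _ => Finset.disjoint_empty_left _, fun v hv => absurd hv (by simp),
        fun i Y hY hYne => absurd (Finset.subset_empty.mp hY) hYne.ne_empty⟩
    · have hXV : X ⊆ H.V := hX.trans (Finset.erase_subset _ _)
      have huX : u ∉ X := fun h => (Finset.notMem_erase u H.V) (hX h)
      have hXne : X ≠ H.V := fun h => huX (h ▸ hu)
      obtain ⟨e, he, h1, h2⟩ := hconn.2 X hXV hne hXne
      obtain ⟨v, hv⟩ := h1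
      rw [Finset.mem_inter] at hv
      obtain ⟨w, hw⟩ := h2
      rw [Finset.mem_sdiff] at hw
      -- back degree of v in X is less than its degree
      have hback : back H v X < H.deg v := by
        apply Finset.card_lt_card
        rw [Finset.ssubset_iff_of_subset
          (Finset.monotone_filter_right _ (fun e' _ hp => hp.1))]
        refine ⟨e, Finset.mem_filter.mpr ⟨he, hv.1⟩, ?_⟩
        rw [Finset.mem_filter]
        rintro ⟨-, -, hsub⟩
        exact hw.2 (hsub hw.1)
      have hbf : back H v X < ∑ i, f i v := lt_of_lt_of_le hback (hdeg v (hXV hv.2))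
      -- induction on X.erase v
      obtain ⟨P', hP'X, hP'dis, hP'cov, hP'D⟩ :=
        ih (X.erase v) (Finset.erase_ssubset hv.2) ((Finset.erase_subset _ _).trans hX)
      have hvP' : ∀ i, v ∉ P' i := fun i hvi =>
        (Finset.notMem_erase v X) (hP'X i hvi)
      have hinsX : ∀ i, insert v (P' i) ⊆ X := fun i =>
        Finset.insert_subset hv.2 ((hP'X i).trans (Finset.erase_subset _ _))
      -- the candidate back-degrees
      set A : Fin p → Finset ℕ := fun i =>
        H.E.filter (fun e' => v ∈ H.inc e' ∧ H.inc e' ⊆ insert v (P' i)) with hA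
      have hAdis : ∀ i j, i ≠ j → Disjoint (A i) (A j) := by
        intro i j hij
        rw [Finset.disjoint_left]
        intro e' hei hej
        rw [hA, Finset.mem_filter] at hei hej
        obtain ⟨w', hw'inc, hw'v⟩ := exists_second H hei.1 v
        have hwi : w' ∈ P' i := by
          have := hei.2.2 hw'inc
          rw [Finset.mem_insert] at this
          tauto
        have hwj : w' ∈ P' j := by
          have := hej.2.2 hw'inc
          rw [Finset.mem_insert] at this
          tauto
        exact (Finset.disjoint_left.mp (hP'dis i j hij)) hwi hwj
      have hAsub : ∀ i, A i ⊆ H.E.filter (fun e' => v ∈ H.inc e' ∧ H.inc e' ⊆ X) := by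
        intro i
        apply Finset.monotone_filter_right
        intro e' _ hp
        exact ⟨hp.1, hp.2.trans (hinsX i)⟩
      have hsum : ∑ i, (A i).card ≤ back H v X := by
        rw [← Finset.card_biUnion (fun i _ j _ hij => hAdis i j hij)]
        exact Finset.card_le_card (Finset.biUnion_subset.mpr (fun i _ => hAsub i))
      have hex : ∃ i, (A i).card < f i v := by
        by_contra h
        push_neg at h
        have : ∑ i, f i v ≤ ∑ i, (A i).card :=
          Finset.sum_le_sum (fun i _ => h i)
        omega
      obtain ⟨i, hi⟩ := hex
      refine ⟨Function.update P' i (insert v (P' i)), ?_, ?_, ?_, ?_⟩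
      · intro j
        by_cases hj : j = i
        · subst hj; rw [Function.update_self]; exact hinsX j
        · rw [Function.update_of_ne hj]
          exact (hP'X j).trans (Finset.erase_subset _ _)
      · intro j k hjk
        have key : ∀ m, Disjoint (insert v (P' m)) (P' k) → True := fun _ _ => trivial
        by_cases hj : j = i <;> by_cases hk : k = i
        · exact absurd (hj.trans hk.symm) hjk
        · rw [hj, Function.update_self, Function.update_of_ne hk]
          rw [Finset.disjoint_insert_left]
          refine ⟨hvP' k, ?_⟩
          rw [← hj]
          exact hP'dis j k hjk
        · rw [hk, Function.update_self, Function.update_of_ne hj]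
          rw [Finset.disjoint_insert_right]
          refine ⟨hvP' j, ?_⟩
          rw [← hk]
          exact hP'dis j k hjk
        · rw [Function.update_of_ne hj, Function.update_of_ne hk]
          exact hP'dis j k hjk
      · intro x hx
        by_cases hxv : x = v
        · exact ⟨i, by rw [Function.update_self]; exact Finset.mem_insert.mpr (Or.inl hxv)⟩
        · obtain ⟨j, hj⟩ := hP'cov x (Finset.mem_erase.mpr ⟨hxv, hx⟩)
          refine ⟨j, ?_⟩
          by_cases hji : j = i
          · subst hji
            rw [Function.update_self]
            exact Finset.mem_insert_of_mem hj
          · rw [Function.update_of_ne hji]; exact hj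
      · intro j
        by_cases hj : j = i
        · subst hj
          rw [Function.update_self]
          intro Y hY hYne
          by_cases hvY : v ∈ Y
          · refine ⟨v, hvY, lt_of_le_of_lt ?_ hi⟩
            exact back_mono H v hY
          · have hYP : Y ⊆ P' j := by
              intro y hy
              rcases Finset.mem_insert.mp (hY hy) with rfl | h
              · exact absurd hy hvY
              · exact h
            exact hP'D j Y hYP hYne
        · rw [Function.update_of_ne hj]
          exact hP'D j

end Aux

end NHypergraph
theorem nonpartitionable_delete_vertex (H : NHypergraph) {p : ℕ}
    (f : Fin p → ℕ → ℕ)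
    (hconn : H.Connected) (hdeg : ∀ v ∈ H.V, H.deg v ≤ ∑ i, f i v)
    (hnp : ¬ H.Partitionable f) (hcard : 2 ≤ H.V.card)
    (u : ℕ) (hu : u ∈ H.V) :
    (H.induce (H.V.erase u)).Partitionable f ∧
      ∀ P : Fin p → Finset ℕ,
        (H.induce (H.V.erase u)).IsFPartition f P →
        (∀ i, f i u = (H.induce (insert u (P i))).deg u) ∧
        (∀ i j, i ≠ j →
          Disjoint ((H.induce (insert u (P i))).E.filter (fun e => u ∈ H.inc e))
            ((H.induce (insert u (P j))).E.filter (fun e => u ∈ H.inc e))) ∧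
        H.E.filter (fun e => u ∈ H.inc e) =
          Finset.univ.biUnion
            (fun i => (H.induce (insert u (P i))).E.filter (fun e => u ∈ H.inc e)) := by
  classical
  have hVind : (H.induce (H.V.erase u)).V = H.V.erase u := by
    show H.V.erase u ∩ H.V = H.V.erase u
    exact Finset.inter_eq_left.mpr (Finset.erase_subset _ _)
  obtain ⟨P₀, hP₀X, hP₀dis, hP₀cov, hP₀D⟩ :=
    NHypergraph.exists_good_partition H f hdeg hconn u hu (H.V.erase u) (Finset.Subset.refl _)
  constructor
  · -- H - u is partitionable
    refine ⟨P₀, ⟨fun i => by rw [hVind]; exact hP₀X i, hP₀dis,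
      fun v hv => hP₀cov v (hVind ▸ hv)⟩, ?_⟩
    intro i
    apply NHypergraph.Dset_strictlyDeg H (f i) (hP₀D i)
    · intro e he
      exact (Finset.mem_filter.mp (Finset.mem_filter.mp he).1).1
    · intro e _; rfl
    · intro x hx
      exact (Finset.mem_inter.mp hx).1
  · -- every f-partition of H - u extends uniquely at u
    intro P hFP
    obtain ⟨⟨hPV, hPdis, hPcov⟩, hSD⟩ := hFP
    have hPsub : ∀ i, P i ⊆ H.V.erase u := fun i => hVind ▸ hPV i
    have huP : ∀ i, u ∉ P i := fun i h => (Finset.notMem_erase u H.V) (hPsub i h)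
    set T : Fin p → Finset ℕ := fun i =>
      (H.induce (insert u (P i))).E.filter (fun e => u ∈ H.inc e) with hT
    have hTmem : ∀ i e, e ∈ T i ↔ e ∈ H.E ∧ H.inc e ⊆ insert u (P i) ∧ u ∈ H.inc e := by
      intro i e
      rw [hT]
      simp only [NHypergraph.induce, Finset.mem_filter, and_assoc]
    have hTdis : ∀ i j, i ≠ j → Disjoint (T i) (T j) := by
      intro i j hij
      rw [Finset.disjoint_left]
      intro e hei hej
      rw [hTmem] at hei hej
      obtain ⟨w, hwinc, hwu⟩ := NHypergraph.exists_second H hei.1 u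
      have hwi : w ∈ P i := by
        have := hei.2.1 hwinc
        rw [Finset.mem_insert] at this
        tauto
      have hwj : w ∈ P j := by
        have := hej.2.1 hwinc
        rw [Finset.mem_insert] at this
        tauto
      exact (Finset.disjoint_left.mp (hPdis i j hij)) hwi hwj
    have hTsub : ∀ i, T i ⊆ H.E.filter (fun e => u ∈ H.inc e) := by
      intro i e he
      rw [hTmem] at he
      exact Finset.mem_filter.mpr ⟨he.1, he.2.2⟩
    have hdT : ∀ i, (H.induce (insert u (P i))).deg u = (T i).card := fun i => rfl
    -- f i u ≤ |T i| for all i, else we could extend the partition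
    have hfle : ∀ i, f i u ≤ (T i).card := by
      intro i
      by_contra h
      push_neg at h
      apply hnp
      refine ⟨Function.update P i (insert u (P i)), ⟨?_, ?_, ?_⟩, ?_⟩
      · intro j
        by_cases hj : j = i
        · rw [hj, Function.update_self]
          exact Finset.insert_subset hu ((hPsub i).trans (Finset.erase_subset _ _))
        · rw [Function.update_of_ne hj]
          exact (hPsub j).trans (Finset.erase_subset _ _)
      · intro j k hjk
        by_cases hj : j = i <;> by_cases hk : k = i
        · exact absurd (hj.trans hk.symm) hjk
        · rw [hj, Function.update_self, Function.update_of_ne hk]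
          rw [Finset.disjoint_insert_left]
          refine ⟨huP k, ?_⟩
          rw [← hj]; exact hPdis j k hjk
        · rw [hk, Function.update_self, Function.update_of_ne hj]
          rw [Finset.disjoint_insert_right]
          refine ⟨huP j, ?_⟩
          rw [← hk]; exact hPdis j k hjk
        · rw [Function.update_of_ne hj, Function.update_of_ne hk]
          exact hPdis j k hjk
      · intro v hv
        by_cases hvu : v = u
        · exact ⟨i, by rw [Function.update_self]; exact Finset.mem_insert.mpr (Or.inl hvu)⟩
        · obtain ⟨j, hj⟩ := hPcov v (by rw [hVind]; exact Finset.mem_erase.mpr ⟨hvu, hv⟩)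
          refine ⟨j, ?_⟩
          by_cases hji : j = i
          · rw [hji, Function.update_self]
            exact Finset.mem_insert_of_mem (hji ▸ hj)
          · rw [Function.update_of_ne hji]; exact hj
      · intro j
        by_cases hj : j = i
        · subst hj
          rw [Function.update_self]
          intro G hG hne
          obtain ⟨hGV, hGE, hGinc⟩ := hG
          by_cases hug : u ∈ G.V
          · refine ⟨u, hug, lt_of_le_of_lt ?_ h⟩
            unfold NHypergraph.deg
            apply Finset.card_le_card
            intro e he
            rw [Finset.mem_filter] at he
            rw [hTmem]
            have heI := hGE he.1
            have hinc : G.inc e = H.inc e := hGinc e he.1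
            simp only [NHypergraph.induce, Finset.mem_filter] at heI
            refine ⟨heI.1, heI.2, ?_⟩
            rw [← hinc]; exact he.2
          · -- G avoids u, so it is a sub of the double induce on P j
            have hGP : G.V ⊆ P j := by
              intro x hx
              have := hGV hx
              rcases Finset.mem_insert.mp (Finset.mem_inter.mp this).1 with rfl | hxP
              · exact absurd hx hug
              · exact hxP
            apply hSD j G ?_ hne
            refine ⟨?_, ?_, ?_⟩
            · intro x hx
              refine Finset.mem_inter.mpr ⟨hGP hx, ?_⟩
              rw [hVind]
              exact hPsub j (hGP hx)
            · intro e he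
              have heI := hGE he
              simp only [NHypergraph.induce, Finset.mem_filter] at heI ⊢
              have hinc : G.inc e = H.inc e := hGinc e he
              have hincG : H.inc e ⊆ P j := by
                rw [← hinc]; exact (G.inc_sub e he).trans hGP
              exact Finset.mem_filter.mpr ⟨Finset.mem_filter.mpr ⟨heI.1, hincG.trans (hPsub j)⟩, hincG⟩
            · intro e he
              exact hGinc e he
        · rw [Function.update_of_ne hj]
          refine NHypergraph.strictlyDeg_mono _ _ (f j) (hSD j) ?_ ?_ ?_
          · intro x hx
            simp only [NHypergraph.induce, Finset.mem_inter] at hx ⊢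
            exact ⟨hx.1, hPsub j hx.1, hx.2⟩
          · intro e he
            simp only [NHypergraph.induce, Finset.mem_filter] at he ⊢
            exact Finset.mem_filter.mpr ⟨Finset.mem_filter.mpr ⟨he.1, he.2.trans (hPsub j)⟩, he.2⟩
          · intro e _; rfl
    -- counting
    have hcardB : (Finset.univ.biUnion T).card = ∑ i, (T i).card :=
      Finset.card_biUnion (fun i _ j _ hij => hTdis i j hij)
    have hBsub : Finset.univ.biUnion T ⊆ H.E.filter (fun e => u ∈ H.inc e) :=
      Finset.biUnion_subset.mpr (fun i _ => hTsub i)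
    have hdu : H.deg u = (H.E.filter (fun e => u ∈ H.inc e)).card := rfl
    have hc1 : (H.E.filter (fun e => u ∈ H.inc e)).card ≤ ∑ i, f i u := by
      rw [← hdu]; exact hdeg u hu
    have hc2 : ∑ i, f i u ≤ ∑ i, (T i).card :=
      Finset.sum_le_sum (fun i _ => hfle i)
    have hc3 : (Finset.univ.biUnion T).card ≤ (H.E.filter (fun e => u ∈ H.inc e)).card :=
      Finset.card_le_card hBsub
    have heqU : H.E.filter (fun e => u ∈ H.inc e) = Finset.univ.biUnion T := by
      apply (Finset.eq_of_subset_of_card_le hBsub ?_).symm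
      omega
    have hfeq : ∀ i, f i u = (T i).card := by
      intro i
      refine le_antisymm (hfle i) ?_
      by_contra h
      push_neg at h
      have : ∑ k, f k u < ∑ k, (T k).card :=
        Finset.sum_lt_sum (fun k _ => hfle k) ⟨i, Finset.mem_univ i, h⟩
      omega
    exact ⟨fun i => (hfeq i).trans (hdT i).symm, hTdis, heqU⟩
end

section
/- Let H be a connected simple hypergraph and let L be a list-assignment with |L(v)| ≥ d_H(v) for all v ∈ V(H). If H does not admit a proper L-coloring, then |L(v)| = d_H(v) for all v ∈ V(H). -/
/-- `H` has no two distinct edges with the same vertex set. -/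
def NatHypergraph.IsSimple (H : NatHypergraph) : Prop :=
  ∀ e ∈ H.E, ∀ e' ∈ H.E, H.inc e = H.inc e' → e = e'

/-- A proper `L`-coloring: colors from the lists, and no edge monochromatic. -/
def NatHypergraph.ProperLColoring (H : NatHypergraph) (L : ℕ → Finset ℕ)
    (φ : ℕ → ℕ) : Prop :=
  (∀ v ∈ H.V, φ v ∈ L v) ∧
    ∀ e ∈ H.E, ∃ u ∈ H.inc e, ∃ w ∈ H.inc e, φ u ≠ φ w

namespace NatHypergraph

/-- A representative vertex of edge `e` other than `x`. -/
noncomputable def rep (H : NatHypergraph) (e x : ℕ) : ℕ :=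
  if h : ((H.inc e).erase x).Nonempty then ((H.inc e).erase x).min' h else 0

lemma rep_mem (H : NatHypergraph) {e x : ℕ} (he : e ∈ H.E) (hx : x ∈ H.inc e) :
    H.rep e x ∈ (H.inc e).erase x := by
  have h2 := H.inc_card e he
  have hne : ((H.inc e).erase x).Nonempty := by
    rw [← Finset.card_pos, Finset.card_erase_of_mem hx]; omega
  rw [rep, dif_pos hne]; exact Finset.min'_mem _ _

/-- Forbidden colors for `x` given already-colored set `S` with coloring `φ`. -/
noncomputable def forb (H : NatHypergraph) (x : ℕ) (S : Finset ℕ) (φ : ℕ → ℕ) : Finset ℕ :=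
  (H.E.filter (fun e => x ∈ H.inc e ∧ H.inc e ⊆ insert x S)).image (fun e => φ (H.rep e x))

noncomputable def pick (H : NatHypergraph) (L : ℕ → Finset ℕ) (x : ℕ) (S : Finset ℕ)
    (φ : ℕ → ℕ) : ℕ :=
  if h : (L x \ H.forb x S φ).Nonempty then (L x \ H.forb x S φ).min' h else 0

noncomputable def greedy (H : NatHypergraph) (L : ℕ → Finset ℕ) :
    List ℕ → Finset ℕ → (ℕ → ℕ) → (ℕ → ℕ)
  | [], _, φ => φ
  | x :: rest, S, φ => H.greedy L rest (insert x S) (Function.update φ x (H.pick L x S φ))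

lemma greedy_not_mem (H : NatHypergraph) (L : ℕ → Finset ℕ) :
    ∀ (m : List ℕ) (S : Finset ℕ) (φ : ℕ → ℕ) (y : ℕ), y ∉ m →
      H.greedy L m S φ y = φ y := by
  intro m
  induction m with
  | nil => intro S φ y _; rfl
  | cons x rest ih =>
      intro S φ y hy
      rw [greedy, ih _ _ y (fun h => hy (List.mem_cons_of_mem _ h)),
        Function.update_of_ne (fun h => hy (by rw [h]; exact List.mem_cons_self))]

lemma greedy_spec (H : NatHypergraph) (L : ℕ → Finset ℕ) :
    ∀ (m : List ℕ) (S : Finset ℕ) (φ₀ : ℕ → ℕ),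
    m.Nodup → (∀ x ∈ m, x ∉ S) →
    (∀ pre x suf, m = pre ++ x :: suf →
      (H.E.filter (fun e => x ∈ H.inc e ∧ H.inc e ⊆ insert x (S ∪ pre.toFinset))).card
        < (L x).card) →
    (∀ x ∈ m, H.greedy L m S φ₀ x ∈ L x) ∧
    (∀ pre x suf, m = pre ++ x :: suf → ∀ e ∈ H.E, x ∈ H.inc e →
      H.inc e ⊆ insert x (S ∪ pre.toFinset) →
      H.greedy L m S φ₀ x ≠ H.greedy L m S φ₀ (H.rep e x)) := by
  intro m
  induction m with
  | nil =>
      intro S φ₀ _ _ _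
      constructor
      · intro x hx; simp at hx
      · intro pre x suf h; exact absurd h (by simp)
  | cons x rest ih =>
      intro S φ₀ hnd hS hcount
      have hxrest : x ∉ rest := (List.nodup_cons.mp hnd).1
      set c := H.pick L x S φ₀ with hc_def
      set φ₁ := Function.update φ₀ x c with hφ₁
      have hforb : (H.forb x S φ₀).card < (L x).card := by
        refine lt_of_le_of_lt Finset.card_image_le ?_
        have := hcount [] x rest rfl
        simpa using this
      have hne : (L x \ H.forb x S φ₀).Nonempty := by
        rw [← Finset.card_pos]
        have := Finset.le_card_sdiff (H.forb x S φ₀) (L x)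
        omega
      have hc : c ∈ L x \ H.forb x S φ₀ := by
        rw [hc_def, pick, dif_pos hne]; exact Finset.min'_mem _ _
      have hS' : ∀ x' ∈ rest, x' ∉ insert x S := by
        intro x' hx' h
        rcases Finset.mem_insert.mp h with h | h
        · exact hxrest (h ▸ hx')
        · exact hS x' (List.mem_cons_of_mem _ hx') h
      have hcount' : ∀ pre' x' suf', rest = pre' ++ x' :: suf' →
          (H.E.filter (fun e => x' ∈ H.inc e ∧
            H.inc e ⊆ insert x' ((insert x S) ∪ pre'.toFinset))).card < (L x').card := by
        intro pre' x' suf' hrest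
        have heq : insert x' ((insert x S) ∪ pre'.toFinset)
            = insert x' (S ∪ (x :: pre').toFinset) := by
          rw [Finset.insert_union, List.toFinset_cons, Finset.union_insert]
        simp only [heq]
        exact hcount (x :: pre') x' suf' (by rw [hrest]; rfl)
      obtain ⟨ih1, ih2⟩ := ih (insert x S) φ₁ (List.nodup_cons.mp hnd).2 hS' hcount'
      have hΦx : H.greedy L (x :: rest) S φ₀ x = c := by
        rw [greedy, greedy_not_mem _ _ _ _ _ _ hxrest]
        exact Function.update_self _ _ _
      constructor
      · intro x'' hx''
        rcases List.mem_cons.mp hx'' with rfl | hx''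
        · rw [hΦx]; exact (Finset.mem_sdiff.mp hc).1
        · rw [greedy]; exact ih1 x'' hx''
      · intro pre x'' suf hdecomp e he hxe hsub
        cases pre with
        | nil =>
            simp only [List.nil_append, List.cons.injEq] at hdecomp
            obtain ⟨rfl, rfl⟩ := hdecomp
            simp only [List.toFinset_nil, Finset.union_empty] at hsub
            have hr := H.rep_mem he hxe
            have hrx : H.rep e x ≠ x := (Finset.mem_erase.mp hr).1
            have hrS : H.rep e x ∈ S := by
              have := hsub (Finset.mem_of_mem_erase hr)
              rcases Finset.mem_insert.mp this with h | h
              · exact absurd h hrx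
              · exact h
            have hrrest : H.rep e x ∉ rest := fun h =>
              hS' _ h (Finset.mem_insert_of_mem hrS)
            have hΦr : H.greedy L (x :: rest) S φ₀ (H.rep e x) = φ₀ (H.rep e x) := by
              rw [greedy, greedy_not_mem _ _ _ _ _ _ hrrest]
              exact Function.update_of_ne hrx _ _
            rw [hΦx, hΦr]
            intro hcontra
            have : φ₀ (H.rep e x) ∈ H.forb x S φ₀ := by
              apply Finset.mem_image_of_mem
              exact Finset.mem_filter.mpr ⟨he, hxe, hsub⟩
            exact (Finset.mem_sdiff.mp hc).2 (hcontra ▸ this)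
        | cons p pre' =>
            simp only [List.cons_append, List.cons.injEq] at hdecomp
            obtain ⟨rfl, hrest⟩ := hdecomp
            have heq : insert x'' (S ∪ (x :: pre').toFinset)
                = insert x'' ((insert x S) ∪ pre'.toFinset) := by
              rw [Finset.insert_union, List.toFinset_cons, Finset.union_insert]
            rw [heq] at hsub
            rw [greedy]
            exact ih2 pre' x'' suf hrest e he hxe hsub

lemma exists_last_mem :
    ∀ (l : List ℕ) (T : Finset ℕ), (∃ t ∈ T, t ∈ l) →
      ∃ pre x suf, l = pre ++ x :: suf ∧ x ∈ T ∧ ∀ y ∈ suf, y ∉ T := by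
  intro l
  induction l with
  | nil => intro T ⟨t, _, ht⟩; simp at ht
  | cons a l' ih =>
      intro T hT
      by_cases h : ∃ t ∈ T, t ∈ l'
      · obtain ⟨pre, x, suf, h1, h2, h3⟩ := ih T h
        exact ⟨a :: pre, x, suf, by rw [h1]; rfl, h2, h3⟩
      · have ha : a ∈ T := by
          obtain ⟨t, htT, htl⟩ := hT
          rcases List.mem_cons.mp htl with rfl | htl'
          · exact htT
          · exact absurd ⟨t, htT, htl'⟩ h
        exact ⟨[], a, l', rfl, ha, fun y hy hyT => h ⟨y, hyT, hy⟩⟩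

lemma exists_order (H : NatHypergraph) (hconn : H.Connected) (v₀ : ℕ) (hv₀ : v₀ ∈ H.V) :
    ∃ l : List ℕ, l.Nodup ∧ l.toFinset = H.V ∧
      (∀ pre x, l = pre ++ [x] → x = v₀) ∧
      (∀ pre x suf, l = pre ++ x :: suf → suf ≠ [] →
        ∃ e ∈ H.E, x ∈ H.inc e ∧ ∃ y ∈ suf, y ∈ H.inc e) := by
  classical
  let P : List ℕ → Prop := fun l =>
    l.Nodup ∧ l.toFinset ⊆ H.V ∧ l ≠ [] ∧
    (∀ pre x, l = pre ++ [x] → x = v₀) ∧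
    (∀ pre x suf, l = pre ++ x :: suf → suf ≠ [] →
      ∃ e ∈ H.E, x ∈ H.inc e ∧ ∃ y ∈ suf, y ∈ H.inc e)
  have key : ∀ k : ℕ, ∀ l : List ℕ, P l → (H.V \ l.toFinset).card = k →
      ∃ l', P l' ∧ l'.toFinset = H.V := by
    intro k
    induction k using Nat.strong_induction_on with
    | _ k ihk =>
      intro l hP hcard
      by_cases hfull : l.toFinset = H.V
      · exact ⟨l, hP, hfull⟩
      · obtain ⟨hnd, hsub, hne, hlast, hedge⟩ := hP
        have hSne : l.toFinset.Nonempty := by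
          rcases l with _ | ⟨a, l'⟩
          · exact absurd rfl hne
          · exact ⟨a, by simp⟩
        obtain ⟨e, he, ⟨y, hy⟩, ⟨u, hu⟩⟩ := hconn.2 l.toFinset hsub hSne hfull
        rw [Finset.mem_inter] at hy
        rw [Finset.mem_sdiff] at hu
        have huV : u ∈ H.V := H.inc_sub e he hu.1
        have hul : u ∉ l := fun h => hu.2 (List.mem_toFinset.mpr h)
        have hP' : P (u :: l) := by
          refine ⟨List.nodup_cons.mpr ⟨hul, hnd⟩, ?_, by simp, ?_, ?_⟩
          · intro z hz
            rw [List.toFinset_cons, Finset.mem_insert] at hz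
            rcases hz with rfl | h
            · exact huV
            · exact hsub h
          · intro pre x hpx
            cases pre with
            | nil =>
                simp only [List.nil_append, List.cons.injEq] at hpx
                exact absurd hpx.2 hne
            | cons p pre' =>
                simp only [List.cons_append, List.cons.injEq] at hpx
                exact hlast pre' x hpx.2
          · intro pre x suf hpx hsne
            cases pre with
            | nil =>
                simp only [List.nil_append, List.cons.injEq] at hpx
                obtain ⟨rfl, rfl⟩ := hpx
                exact ⟨e, he, hu.1, y, List.mem_toFinset.mp hy.2, hy.1⟩
            | cons p pre' =>
                simp only [List.cons_append, List.cons.injEq] at hpx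
                exact hedge pre' x suf hpx.2 hsne
        have hmeas : (H.V \ (u :: l).toFinset).card < k := by
          rw [← hcard]
          apply Finset.card_lt_card
          rw [List.toFinset_cons]
          have h1 : H.V \ insert u l.toFinset = (H.V \ l.toFinset).erase u := by
            ext a; simp [Finset.mem_sdiff, Finset.mem_erase]; tauto
          rw [h1]
          exact Finset.erase_ssubset (Finset.mem_sdiff.mpr ⟨huV, hu.2⟩)
        exact ihk _ hmeas (u :: l) hP' rfl
  have hP0 : P [v₀] := by
    refine ⟨List.nodup_singleton _, by simp [hv₀], by simp, ?_, ?_⟩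
    · intro pre x hpx
      cases pre with
      | nil => simpa using hpx.symm
      | cons p pre' =>
          exfalso
          have := congrArg List.length hpx
          simp at this
    · intro pre x suf hpx hsne
      exfalso
      have := congrArg List.length hpx
      simp at this
      cases pre <;> simp_all
  obtain ⟨l, ⟨hnd, _, _, hlast, hedge⟩, hfull⟩ := key _ [v₀] hP0 rfl
  exact ⟨l, hnd, hfull, hlast, hedge⟩

end NatHypergraph

theorem brooks_list_hypergraph (H : NatHypergraph) (hconn : H.Connected)
    (hsimple : H.IsSimple)
    (L : ℕ → Finset ℕ) (hL : ∀ v ∈ H.V, H.deg v ≤ (L v).card)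
    (hnc : ¬ ∃ φ, H.ProperLColoring L φ) :
    ∀ v ∈ H.V, (L v).card = H.deg v := by
  intro v₀ hv₀
  by_contra hne
  have hslack : H.deg v₀ < (L v₀).card := lt_of_le_of_ne (hL v₀ hv₀) (fun h => hne h.symm)
  obtain ⟨l, hnd, hfull, hlast, hedge⟩ := H.exists_order hconn v₀ hv₀
  have hcount : ∀ pre x suf, l = pre ++ x :: suf →
      (H.E.filter (fun e => x ∈ H.inc e ∧
        H.inc e ⊆ insert x ((∅ : Finset ℕ) ∪ pre.toFinset))).card < (L x).card := by
    intro pre x suf hdec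
    have hxl : x ∈ l := by rw [hdec]; simp
    have hxV : x ∈ H.V := by rw [← hfull]; exact List.mem_toFinset.mpr hxl
    have hsubfil : H.E.filter (fun e => x ∈ H.inc e ∧
        H.inc e ⊆ insert x ((∅ : Finset ℕ) ∪ pre.toFinset))
        ⊆ H.E.filter (fun e => x ∈ H.inc e) := by
      intro e he
      rw [Finset.mem_filter] at he ⊢
      exact ⟨he.1, he.2.1⟩
    cases suf with
    | nil =>
        have hx : x = v₀ := hlast pre x hdec
        calc (H.E.filter (fun e => x ∈ H.inc e ∧
              H.inc e ⊆ insert x ((∅ : Finset ℕ) ∪ pre.toFinset))).card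
            ≤ H.deg x := Finset.card_le_card hsubfil
          _ < (L x).card := by rw [hx]; exact hslack
    | cons s suf' =>
        obtain ⟨e', he', hxe', y, hy, hye'⟩ := hedge pre x (s :: suf') hdec (by simp)
        have hy' : y ∉ insert x ((∅ : Finset ℕ) ∪ pre.toFinset) := by
          have hnd' : (pre ++ x :: s :: suf').Nodup := hdec ▸ hnd
          rw [Finset.mem_insert, Finset.empty_union]
          rintro (rfl | hyp)
          · exact (List.nodup_cons.mp (List.nodup_append.mp hnd').2.1).1 hy
          · have hdisj := (List.nodup_append.mp hnd').2.2
            exact hdisj _ (List.mem_toFinset.mp hyp) _ (List.mem_cons_of_mem _ hy) rfl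
        have he'mem : e' ∈ H.E.filter (fun e => x ∈ H.inc e) :=
          Finset.mem_filter.mpr ⟨he', hxe'⟩
        have he'not : e' ∉ H.E.filter (fun e => x ∈ H.inc e ∧
            H.inc e ⊆ insert x ((∅ : Finset ℕ) ∪ pre.toFinset)) := by
          intro h
          exact hy' ((Finset.mem_filter.mp h).2.2 hye')
        have hss : H.E.filter (fun e => x ∈ H.inc e ∧
            H.inc e ⊆ insert x ((∅ : Finset ℕ) ∪ pre.toFinset))
            ⊂ H.E.filter (fun e => x ∈ H.inc e) :=
          (Finset.ssubset_iff_of_subset hsubfil).mpr ⟨e', he'mem, he'not⟩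
        exact lt_of_lt_of_le (Finset.card_lt_card hss) (hL x hxV)
  have hSempty : ∀ x ∈ l, x ∉ (∅ : Finset ℕ) := by simp
  obtain ⟨hcol, hprop⟩ := H.greedy_spec L l ∅ (fun _ => 0) hnd hSempty hcount
  apply hnc
  refine ⟨H.greedy L l ∅ (fun _ => 0), ?_, ?_⟩
  · intro v hv
    exact hcol v (List.mem_toFinset.mp (hfull ▸ hv))
  · intro e he
    have h2 := H.inc_card e he
    have hsubV : H.inc e ⊆ l.toFinset := hfull ▸ H.inc_sub e he
    have hincne : ∃ t ∈ H.inc e, t ∈ l := by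
      obtain ⟨t, ht⟩ := Finset.card_pos.mp (by omega : 0 < (H.inc e).card)
      exact ⟨t, ht, List.mem_toFinset.mp (hsubV ht)⟩
    obtain ⟨pre, x, suf, hdec, hxe, hsufe⟩ := NatHypergraph.exists_last_mem l (H.inc e) hincne
    have hsub : H.inc e ⊆ insert x ((∅ : Finset ℕ) ∪ pre.toFinset) := by
      intro z hz
      have hzl : z ∈ l := List.mem_toFinset.mp (hsubV hz)
      rw [hdec] at hzl
      rw [Finset.mem_insert, Finset.empty_union]
      rcases List.mem_append.mp hzl with h | h
      · exact Or.inr (List.mem_toFinset.mpr h)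
      · rcases List.mem_cons.mp h with rfl | h
        · exact Or.inl rfl
        · exact absurd hz (hsufe z h)
    have hneq := hprop pre x suf hdec e he hxe hsub
    have hr := H.rep_mem he hxe
    exact ⟨x, hxe, H.rep e x, Finset.mem_of_mem_erase hr, hneq⟩
end

section
/- Let H be a connected hypergraph. A vertex v of H is non-separating if and only if the hypergraph H ÷ v is empty or connected. -/
theorem nonseparating_iff_shrink_connected (H : NHypergraph)
    (hconn : H.Connected) (v : ℕ) (hv : v ∈ H.V) :
    ¬ H.Separating v ↔
      ((H.shrinkDel v).V = ∅ ∨ (H.shrinkDel v).Connected) := by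
  have hV : (H.shrinkDel v).V = H.V.erase v := by
    simp [NHypergraph.shrinkDel, NHypergraph.shrink, Finset.inter_eq_left,
      Finset.erase_subset]
  have key : ∀ e ∈ H.E, H.inc e ∩ H.V.erase v = (H.inc e).erase v := by
    intro e he
    ext w
    simp only [Finset.mem_inter, Finset.mem_erase]
    constructor
    · rintro ⟨h1, h2, _⟩; exact ⟨h2, h1⟩
    · rintro ⟨h1, h2⟩; exact ⟨h2, h1, H.inc_sub e he h2⟩
  constructor
  · -- ¬Separating → empty ∨ connected
    intro hns
    by_contra hcon
    push_neg at hcon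
    obtain ⟨hne, hnc⟩ := hcon
    rw [hV] at hne
    have hne' : (H.V.erase v).Nonempty := hne
    rw [NHypergraph.Connected] at hnc
    push_neg at hnc
    have h2 := hnc (by rw [hV]; exact hne')
    obtain ⟨X, hXsub, hXne, hXneV, hX⟩ := h2
    rw [hV] at hXsub hXneV
    apply hns
    refine ⟨insert v X, insert v (H.V.erase v \ X), ?_, ?_, ?_, ?_, ?_⟩
    · ext w
      simp only [Finset.mem_union, Finset.mem_insert, Finset.mem_sdiff,
        Finset.mem_erase]
      constructor
      · rintro ((h | h) | (h | h))
        · exact h ▸ hv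
        · exact (Finset.mem_erase.mp (hXsub h)).2
        · exact h ▸ hv
        · exact h.1.2
      · intro hw
        by_cases hwv : w = v
        · exact Or.inl (Or.inl hwv)
        · by_cases hwX : w ∈ X
          · exact Or.inl (Or.inr hwX)
          · exact Or.inr (Or.inr ⟨⟨hwv, hw⟩, hwX⟩)
    · ext w
      simp only [Finset.mem_inter, Finset.mem_insert, Finset.mem_sdiff,
        Finset.mem_erase, Finset.mem_singleton]
      constructor
      · rintro ⟨h | h, h' | h'⟩
        · exact h
        · exact h
        · exact h'
        · exact absurd h h'.2
      · intro h; exact ⟨Or.inl h, Or.inl h⟩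
    · obtain ⟨w, hw⟩ := hXne
      have : w ≠ v := (Finset.mem_erase.mp (hXsub hw)).1
      have : ({v, w} : Finset ℕ).card = 2 := by
        rw [Finset.card_insert_of_notMem (by simpa using this.symm)]; simp
      calc 2 = ({v, w} : Finset ℕ).card := this.symm
        _ ≤ _ := Finset.card_le_card (by
            intro x hx
            simp only [Finset.mem_insert, Finset.mem_singleton] at hx
            rcases hx with h | h
            · exact Finset.mem_insert.mpr (Or.inl h)
            · exact Finset.mem_insert.mpr (Or.inr (h ▸ hw)))
    · have hVX : (H.V.erase v \ X).Nonempty := by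
        rw [Finset.sdiff_nonempty]
        intro hsub
        exact hXneV (Finset.Subset.antisymm hXsub hsub)
      obtain ⟨w, hw⟩ := hVX
      have hwv : w ≠ v := (Finset.mem_erase.mp (Finset.mem_sdiff.mp hw).1).1
      have : ({v, w} : Finset ℕ).card = 2 := by
        rw [Finset.card_insert_of_notMem (by simpa using hwv.symm)]; simp
      calc 2 = ({v, w} : Finset ℕ).card := this.symm
        _ ≤ _ := Finset.card_le_card (by
            intro x hx
            simp only [Finset.mem_insert, Finset.mem_singleton] at hx
            rcases hx with h | h
            · exact Finset.mem_insert.mpr (Or.inl h)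
            · exact Finset.mem_insert.mpr (Or.inr (h ▸ hw)))
    · intro e he
      have hesub : (H.inc e).erase v ⊆ H.V.erase v := by
        intro w hw
        have := Finset.mem_erase.mp hw
        exact Finset.mem_erase.mpr ⟨this.1, H.inc_sub e he this.2⟩
      by_cases hcard : 2 ≤ ((H.inc e).erase v).card
      · -- e is an edge of H ÷ v
        have heE' : e ∈ (H.shrinkDel v).E := by
          simp only [NHypergraph.shrinkDel, NHypergraph.shrink, Finset.mem_filter]
          exact ⟨he, by rw [key e he]; exact hcard⟩
        have hXe := hX e heE'
        have hinc' : (H.shrinkDel v).inc e = (H.inc e).erase v := key e he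
        by_cases hcase : ((H.inc e).erase v ∩ X).Nonempty
        · -- then erase v (inc e) \ X must be empty, i.e. ⊆ X
          have hdiff : (H.inc e).erase v \ X = ∅ := by
            by_contra habs
            exact habs (by have := hXe (by rw [hinc']; exact hcase); rwa [hinc'] at this)
          have hsub : (H.inc e).erase v ⊆ X := by
            intro w hw
            by_contra hwX
            have : w ∈ (H.inc e).erase v \ X := Finset.mem_sdiff.mpr ⟨hw, hwX⟩
            rw [hdiff] at this; exact absurd this (Finset.notMem_empty w)
          left
          intro w hw
          by_cases hwv : w = v
          · exact Finset.mem_insert.mpr (Or.inl hwv)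
          · exact Finset.mem_insert.mpr
              (Or.inr (hsub (Finset.mem_erase.mpr ⟨hwv, hw⟩)))
        · -- erase v (inc e) disjoint from X
          rw [Finset.not_nonempty_iff_eq_empty] at hcase
          right
          intro w hw
          by_cases hwv : w = v
          · exact Finset.mem_insert.mpr (Or.inl hwv)
          · have hw' : w ∈ (H.inc e).erase v := Finset.mem_erase.mpr ⟨hwv, hw⟩
            refine Finset.mem_insert.mpr (Or.inr (Finset.mem_sdiff.mpr
              ⟨hesub hw', ?_⟩))
            intro hwX
            have : w ∈ (H.inc e).erase v ∩ X := Finset.mem_inter.mpr ⟨hw', hwX⟩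
            rw [hcase] at this; exact absurd this (Finset.notMem_empty w)
      · -- small edge: inc e = {v, w}
        push_neg at hcard
        have hvin : v ∈ H.inc e := by
          by_contra hvni
          rw [Finset.erase_eq_of_notMem hvni] at hcard
          exact absurd (H.inc_card e he) (by omega)
        have hc1 : ((H.inc e).erase v).card = (H.inc e).card - 1 :=
          Finset.card_erase_of_mem hvin
        have hc2 : ((H.inc e).erase v).card = 1 := by
          have := H.inc_card e he; omega
        obtain ⟨w, hw⟩ := Finset.card_eq_one.mp hc2
        have hsub : H.inc e ⊆ insert v {w} := by
          intro x hx
          by_cases hxv : x = v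
          · exact Finset.mem_insert.mpr (Or.inl hxv)
          · have : x ∈ (H.inc e).erase v := Finset.mem_erase.mpr ⟨hxv, hx⟩
            rw [hw] at this
            exact Finset.mem_insert.mpr (Or.inr this)
        have hwV : w ∈ H.V.erase v := by
          apply hesub; rw [hw]; exact Finset.mem_singleton_self w
        by_cases hwX : w ∈ X
        · left
          exact hsub.trans (by
            intro x hx
            simp only [Finset.mem_insert, Finset.mem_singleton] at hx
            rcases hx with h | h
            · exact Finset.mem_insert.mpr (Or.inl h)
            · exact Finset.mem_insert.mpr (Or.inr (h ▸ hwX)))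
        · right
          exact hsub.trans (by
            intro x hx
            simp only [Finset.mem_insert, Finset.mem_singleton] at hx
            rcases hx with h | h
            · exact Finset.mem_insert.mpr (Or.inl h)
            · exact Finset.mem_insert.mpr (Or.inr
                (h ▸ Finset.mem_sdiff.mpr ⟨hwV, hwX⟩)))
  · -- empty ∨ connected → ¬Separating
    rintro hcon ⟨X₁, X₂, hunion, hinter, hc1, hc2, hedges⟩
    have hvX₁ : v ∈ X₁ := by
      have : v ∈ X₁ ∩ X₂ := by rw [hinter]; exact Finset.mem_singleton_self v
      exact (Finset.mem_inter.mp this).1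
    have hvX₂ : v ∈ X₂ := by
      have : v ∈ X₁ ∩ X₂ := by rw [hinter]; exact Finset.mem_singleton_self v
      exact (Finset.mem_inter.mp this).2
    have hX₁sub : X₁ ⊆ H.V := hunion ▸ Finset.subset_union_left
    have hX₂sub : X₂ ⊆ H.V := hunion ▸ Finset.subset_union_right
    have he1 : (X₁.erase v).Nonempty := by
      rw [← Finset.card_pos, Finset.card_erase_of_mem hvX₁]; omega
    have he2 : (X₂.erase v).Nonempty := by
      rw [← Finset.card_pos, Finset.card_erase_of_mem hvX₂]; omega
    have hXsub : X₁.erase v ⊆ H.V.erase v := by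
      intro w hw
      have := Finset.mem_erase.mp hw
      exact Finset.mem_erase.mpr ⟨this.1, hX₁sub this.2⟩
    have hdisj : ∀ w, w ∈ X₁.erase v → w ∈ X₂ → False := by
      intro w hw hw2
      have h1 := Finset.mem_erase.mp hw
      have : w ∈ X₁ ∩ X₂ := Finset.mem_inter.mpr ⟨h1.2, hw2⟩
      rw [hinter, Finset.mem_singleton] at this
      exact h1.1 this
    rcases hcon with hemp | hconn'
    · rw [hV] at hemp
      obtain ⟨w, hw⟩ := he1
      have : w ∈ H.V.erase v := hXsub hw
      rw [hemp] at this
      exact absurd this (Finset.notMem_empty w)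
    · obtain ⟨w₂, hw₂⟩ := he2
      have hXne : X₁.erase v ≠ H.V.erase v := by
        intro heq
        have hw₂' : w₂ ∈ H.V.erase v := by
          have := Finset.mem_erase.mp hw₂
          exact Finset.mem_erase.mpr ⟨this.1, hX₂sub this.2⟩
        rw [← heq] at hw₂'
        exact hdisj w₂ hw₂' (Finset.mem_erase.mp hw₂).2
      obtain ⟨e, he, hne1, hne2⟩ := hconn'.2 (X₁.erase v)
        (by rw [hV]; exact hXsub) he1 (by rw [hV]; exact hXne)
      have heE : e ∈ H.E := by
        simp only [NHypergraph.shrinkDel, NHypergraph.shrink,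
          Finset.mem_filter] at he
        exact he.1
      have hinc' : (H.shrinkDel v).inc e = (H.inc e).erase v := key e heE
      rw [hinc'] at hne1 hne2
      rcases hedges e heE with h | h
      · obtain ⟨w, hw⟩ := hne2
        have hw' := Finset.mem_sdiff.mp hw
        have := Finset.mem_erase.mp hw'.1
        exact hw'.2 (Finset.mem_erase.mpr ⟨this.1, h this.2⟩)
      · obtain ⟨w, hw⟩ := hne1
        have hw' := Finset.mem_inter.mp hw
        have := Finset.mem_erase.mp hw'.1
        exact hdisj w hw'.2 (h this.2)
end
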